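/- Generalised quantifier and diamond rules: in every properly closed nested calculus NQ.L, (1) if R_bf ∈ NQ.L then the rule L∀_bf — from S{X; A(y/x), ∀xA, Γ ⇒ Δ, [Y,y; Π ⇒ Σ]} infer S{X; ∀xA, Γ ⇒ Δ, [Y,y; Π ⇒ Σ]} — is admissible; (2) if R_ui ∈ NQ.L then the rule L∀_ui — from S{X; A(y/x), ∀xA, Γ ⇒ Δ} infer S{X; ∀xA, Γ ⇒ Δ} — is admissible; (3) if R_cbf ∈ NQ.L then the rule L∀_cbf — from S{X,y; Γ ⇒ Δ, [Y; A(y/x), ∀xA, Π ⇒ Σ]} infer S{X,y; Γ ⇒ Δ, [Y; ∀xA, Π ⇒ Σ]} — is admissible; and (4) if R_D ∈ NQ.L then the rule L_D — from S{X; □A, Γ ⇒ Δ, [∅; A ⇒ ]} infer S{X; □A, Γ ⇒ Δ} — is admissible. -/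

import Mathlib

set_option maxHeartbeats 1000000

namespace NQML

/-! ## The first-order modal language 𝓛 -/

/-- Formulas of the first-order modal language 𝓛:
`A ::= R i (x₁,…,xₙ) | x = y | ⊥ | A ⊃ A | ∀x A | □A`, variables are natural numbers. -/
inductive Fml : Type
  | rel : ℕ → List ℕ → Fml
  | eq  : ℕ → ℕ → Fml
  | bot : Fml
  | imp : Fml → Fml → Fml
  | all : ℕ → Fml → Fml
  | box : Fml → Fml
  deriving DecidableEq

namespace Fml

/-- Atomic formulas. -/
def Atomic : Fml → Prop
  | rel _ _ => True
  | eq _ _  => True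
  | _       => False

/-- Free variables of a formula. -/
def fv : Fml → Finset ℕ
  | rel _ l => l.toFinset
  | eq a b  => {a, b}
  | bot     => ∅
  | imp A B => fv A ∪ fv B
  | all z A => (fv A).erase z
  | box A   => fv A

/-- Capture-avoiding application of a renaming `σ` to the free variables of a formula;
bound variables are renamed when a capture would occur. -/
def substF : (ℕ → ℕ) → Fml → Fml
  | σ, rel n l => rel n (l.map σ)
  | σ, eq a b  => eq (σ a) (σ b)
  | _, bot     => bot
  | σ, imp A B => imp (substF σ A) (substF σ B)
  | σ, box A   => box (substF σ A)
  | σ, all z A =>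
      let captured := ((fv A).erase z).image σ
      let z' := if z ∈ captured then captured.sup id + 1 else z
      all z' (substF (Function.update σ z z') A)

/-- `A.sub y x` is `A(y/x)`: the capture-avoiding substitution of `y` for the free
occurrences of `x` in `A`. -/
def sub (A : Fml) (y x : ℕ) : Fml := substF (fun v => if v = x then y else v) A

/-- Defined connectives. -/
def neg (A : Fml) : Fml := imp A bot
def top : Fml := imp bot bot
def conj (A B : Fml) : Fml := neg (imp A (neg B))
def disj (A B : Fml) : Fml := imp (neg A) B
def ex (x : ℕ) (A : Fml) : Fml := neg (all x (neg A))

/-- The existence predicate `𝓔 x := ∃ y (y = x)` (with `y` a variable distinct from `x`). -/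
def Epred (x : ℕ) : Fml := ex (x + 1) (eq (x + 1) x)

end Fml

/-! ## Nested sequents -/

mutual
  /-- Nested sequents `S ::= X;Γ⇒Δ | S,[S],…,[S]`: a node carries a signature `X`
  (a multiset of variables), an antecedent `Γ` and a succedent `Δ` (multisets of
  formulas), and a list of bracketed nested sequents. -/
  inductive NSeq : Type
    | node : Multiset ℕ → Multiset Fml → Multiset Fml → NSeqs → NSeq
  /-- Lists of nested sequents. -/
  inductive NSeqs : Type
    | nil  : NSeqs
    | cons : NSeq → NSeqs → NSeqs
end

namespace NSeqs
def append : NSeqs → NSeqs → NSeqs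
  | nil, t => t
  | cons s ss, t => cons s (append ss t)
end NSeqs

instance : Append NSeqs := ⟨NSeqs.append⟩

/-- Merging two nested sequents at the root. -/
def NSeq.merge : NSeq → NSeq → NSeq
  | .node X Γ Δ cs, .node Y Φ Ψ ds => .node (X + Y) (Γ + Φ) (Δ + Ψ) (cs ++ ds)

/-- Free variables of a multiset of formulas. -/
def msFv (Γ : Multiset Fml) : Finset ℕ := (Γ.map Fml.fv).sup

mutual
  /-- Variables occurring (in the signature or free in a formula) in a nested sequent. -/
  def NSeq.fv : NSeq → Finset ℕ
    | .node X Γ Δ cs => X.toFinset ∪ msFv Γ ∪ msFv Δ ∪ NSeqs.fv cs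
  def NSeqs.fv : NSeqs → Finset ℕ
    | .nil => ∅
    | .cons s ss => NSeq.fv s ∪ NSeqs.fv ss
end

mutual
  /-- Componentwise application of a renaming to a nested sequent. -/
  def NSeq.subst : NSeq → (ℕ → ℕ) → NSeq
    | .node X Γ Δ cs, σ =>
        .node (X.map σ) (Γ.map (Fml.substF σ)) (Δ.map (Fml.substF σ)) (NSeqs.subst cs σ)
  def NSeqs.subst : NSeqs → (ℕ → ℕ) → NSeqs
    | .nil, _ => .nil
    | .cons s ss, σ => .cons (NSeq.subst s σ) (NSeqs.subst ss σ)
end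

/-! ## Contexts -/

mutual
  /-- Contexts: nested sequents with holes in consequent position.  A node records
  how many holes occur at that node together with the bracketed sub-contexts. -/
  inductive NCtx : Type
    | node : Multiset ℕ → Multiset Fml → Multiset Fml → ℕ → NCtxs → NCtx
  inductive NCtxs : Type
    | nil  : NCtxs
    | cons : NCtx → NCtxs → NCtxs
end

namespace NCtxs
def append : NCtxs → NCtxs → NCtxs
  | nil, t => t
  | cons c cs, t => cons c (append cs t)
end NCtxs

instance : Append NCtxs := ⟨NCtxs.append⟩

mutual
  /-- The number of holes of a context. -/
  def NCtx.holes : NCtx → ℕ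
    | .node _ _ _ k cs => k + NCtxs.holes cs
  def NCtxs.holes : NCtxs → ℕ
    | .nil => 0
    | .cons c cs => NCtx.holes c + NCtxs.holes cs
end

mutual
  /-- The list of depths of the holes of a context (in the order in which they are filled). -/
  def NCtx.holeDepths : NCtx → List ℕ
    | .node _ _ _ k cs => List.replicate k 0 ++ (NCtxs.holeDepths cs).map (· + 1)
  def NCtxs.holeDepths : NCtxs → List ℕ
    | .nil => []
    | .cons c cs => NCtx.holeDepths c ++ NCtxs.holeDepths cs
end

mutual
  /-- Filling the holes of a context with a list of nested sequents: each nested sequent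
  is merged at the node where the corresponding hole occurs. -/
  def NCtx.fill : NCtx → List NSeq → NSeq
    | .node X Γ Δ k cs, L =>
        (L.take k).foldl NSeq.merge (.node X Γ Δ (NCtxs.fill cs (L.drop k)))
  def NCtxs.fill : NCtxs → List NSeq → NSeqs
    | .nil, _ => .nil
    | .cons c cs, L =>
        .cons (NCtx.fill c (L.take (NCtx.holes c))) (NCtxs.fill cs (L.drop (NCtx.holes c)))
end

/-- Merging two contexts at the root. -/
def NCtx.mergeC : NCtx → NCtx → NCtx
  | .node X Γ Δ k cs, .node Y Φ Ψ j ds => .node (X + Y) (Γ + Φ) (Δ + Ψ) (k + j) (cs ++ ds)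

mutual
  /-- Plugging a context into the first hole of a context. -/
  def NCtx.plug : NCtx → NCtx → NCtx
    | .node X Γ Δ k cs, D =>
        if k = 0 then .node X Γ Δ k (NCtxs.plug cs D)
        else NCtx.mergeC (.node X Γ Δ (k - 1) cs) D
  def NCtxs.plug : NCtxs → NCtx → NCtxs
    | .nil, _ => .nil
    | .cons c cs, D =>
        if NCtx.holes c = 0 then .cons c (NCtxs.plug cs D) else .cons (NCtx.plug c D) cs
end

/-! ## Frames, axioms and proper closure -/

/-- The axioms D, T, B, 4, 5, CBF, BF, UI. -/
inductive Ax : Type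
  | D | T | B | four | five | cbf | bf | ui
  deriving DecidableEq

/-- A frame `⟨W, R, D⟩` with worlds `W`, accessibility `Rel` and domains `Dom` over a
universe `U` of objects; some world has a nonempty domain. -/
structure Frame (W U : Type) : Type where
  Rel : W → W → Prop
  Dom : W → Set U
  nonempty : Nonempty W
  dom_nonempty : ∃ w, (Dom w).Nonempty

/-- The frame/domain condition corresponding to each axiom. -/
def Frame.sat {W U : Type} (F : Frame W U) : Ax → Prop
  | .D    => ∀ w, ∃ v, F.Rel w v
  | .T    => ∀ w, F.Rel w w
  | .B    => ∀ w v, F.Rel w v → F.Rel v w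
  | .four => ∀ w v u, F.Rel w v → F.Rel v u → F.Rel w u
  | .five => ∀ w v u, F.Rel w v → F.Rel w u → F.Rel v u
  | .cbf  => ∀ w v, F.Rel w v → F.Dom w ⊆ F.Dom v
  | .bf   => ∀ w v, F.Rel w v → F.Dom v ⊆ F.Dom w
  | .ui   => ∀ w v, F.Dom w = F.Dom v

/-- A `Q.L`-frame: a frame satisfying the conditions of all axioms in `L`. -/
def FrameFor {W U : Type} (F : Frame W U) (L : Set Ax) : Prop := ∀ a ∈ L, F.sat a

/-- `L` is properly closed: whenever every `Q.L`-frame satisfies the frame condition of an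
axiom among 4, 5, CBF, BF, that axiom belongs to `L`. -/
def ProperlyClosed (L : Set Ax) : Prop :=
  ∀ a ∈ ({Ax.four, Ax.five, Ax.cbf, Ax.bf} : Set Ax),
    (∀ (W U : Type) (F : Frame W U), FrameFor F L → F.sat a) → a ∈ L

/-! ## Models, satisfaction, validity and the formula interpretation -/

/-- A model: a frame together with a valuation interpreting each `n`-ary relation symbol
at each world by tuples of objects from the union of the domains. -/
structure Model (W U : Type) extends Frame W U where
  Val : W → ℕ → List U → Prop
  val_dom : ∀ w i l, Val w i l → ∀ u ∈ l, ∃ v, u ∈ Dom v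

/-- Satisfaction of a formula at a world under an assignment (variables are rigid). -/
def Model.sat {W U : Type} (M : Model W U) : (ℕ → U) → W → Fml → Prop
  | σ, w, .rel i l => M.Val w i (l.map σ)
  | σ, _, .eq a b  => σ a = σ b
  | _, _, .bot     => False
  | σ, w, .imp A B => M.sat σ w A → M.sat σ w B
  | σ, w, .all x A => ∀ u ∈ M.Dom w, M.sat (Function.update σ x u) w A
  | σ, w, .box A   => ∀ v, M.Rel w v → M.sat σ v A

/-- An assignment maps every variable into the union of the domains. -/
def Assign {W U : Type} (M : Model W U) (σ : ℕ → U) : Prop := ∀ x, ∃ w, σ x ∈ M.Dom w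

/-- `Q.L`-validity: truth at every world of every model on a `Q.L`-frame under every
assignment. -/
def Valid (L : Set Ax) (A : Fml) : Prop :=
  ∀ (W U : Type) (M : Model W U), FrameFor M.toFrame L →
    ∀ σ, Assign M σ → ∀ w, M.sat σ w A

/-- Iterated conjunction and disjunction. -/
def listConj : List Fml → Fml
  | [] => Fml.top
  | A :: l => Fml.conj A (listConj l)

def listDisj : List Fml → Fml
  | [] => Fml.bot
  | A :: l => Fml.disj A (listDisj l)

mutual
  /-- The formula interpretation of a nested sequent:
  `fm(X;Γ⇒Δ,[S₁],…,[Sₙ]) = (⋀_{x∈X} 𝓔x ∧ ⋀Γ ⊃ ⋁Δ) ∨ ⋁ₖ □ fm(Sₖ)`. -/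
  noncomputable def NSeq.fm : NSeq → Fml
    | .node X Γ Δ cs =>
        Fml.disj
          (Fml.imp (Fml.conj (listConj (X.toList.map Fml.Epred)) (listConj Γ.toList))
            (listDisj Δ.toList))
          (NSeqs.fmDisj cs)
  noncomputable def NSeqs.fmDisj : NSeqs → Fml
    | .nil => Fml.bot
    | .cons s ss => Fml.disj (Fml.box (NSeq.fm s)) (NSeqs.fmDisj ss)
end

/-! ## The nested calculus NQ.L -/

/-- A single rule application (instance) of the nested calculus `NQ.L`: `Step L ps S`
says that `S` can be inferred from the list of premisses `ps` by one rule of `NQ.L`. -/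
inductive Step (L : Set Ax) : List NSeq → NSeq → Prop
  /-- Initial sequents `S{X; P,Γ ⇒ Δ,P}` with `P` atomic. -/
  | init (C : NCtx) (X : Multiset ℕ) (Γ Δ : Multiset Fml) (P : Fml) :
      C.holes = 1 → P.Atomic →
      Step L [] (C.fill [.node X (P ::ₘ Γ) (P ::ₘ Δ) .nil])
  /-- `L⊥`. -/
  | botL (C : NCtx) (X : Multiset ℕ) (Γ Δ : Multiset Fml) :
      C.holes = 1 →
      Step L [] (C.fill [.node X (Fml.bot ::ₘ Γ) Δ .nil])
  /-- `L⊃`. -/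
  | impL (C : NCtx) (X : Multiset ℕ) (Γ Δ : Multiset Fml) (A B : Fml) :
      C.holes = 1 →
      Step L [C.fill [.node X Γ (A ::ₘ Δ) .nil], C.fill [.node X (B ::ₘ Γ) Δ .nil]]
        (C.fill [.node X (Fml.imp A B ::ₘ Γ) Δ .nil])
  /-- `R⊃`. -/
  | impR (C : NCtx) (X : Multiset ℕ) (Γ Δ : Multiset Fml) (A B : Fml) :
      C.holes = 1 →
      Step L [C.fill [.node X (A ::ₘ Γ) (B ::ₘ Δ) .nil]]
        (C.fill [.node X Γ (Fml.imp A B ::ₘ Δ) .nil])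
  /-- `L∀`. -/
  | allL (C : NCtx) (X : Multiset ℕ) (Γ Δ : Multiset Fml) (x z : ℕ) (A : Fml) :
      C.holes = 1 →
      Step L [C.fill [.node (z ::ₘ X) (A.sub z x ::ₘ Fml.all x A ::ₘ Γ) Δ .nil]]
        (C.fill [.node (z ::ₘ X) (Fml.all x A ::ₘ Γ) Δ .nil])
  /-- `R∀` with `y` fresh. -/
  | allR (C : NCtx) (X : Multiset ℕ) (Γ Δ : Multiset Fml) (x y : ℕ) (A : Fml) :
      C.holes = 1 → y ∉ NSeq.fv (C.fill [.node X Γ (Fml.all x A ::ₘ Δ) .nil]) →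
      Step L [C.fill [.node (y ::ₘ X) Γ (A.sub y x ::ₘ Δ) .nil]]
        (C.fill [.node X Γ (Fml.all x A ::ₘ Δ) .nil])
  /-- `L□`. -/
  | boxL (C : NCtx) (X Y : Multiset ℕ) (Γ Δ Φ Ψ : Multiset Fml) (ts : NSeqs) (A : Fml) :
      C.holes = 1 →
      Step L [C.fill [.node X (Fml.box A ::ₘ Γ) Δ (.cons (.node Y (A ::ₘ Φ) Ψ ts) .nil)]]
        (C.fill [.node X (Fml.box A ::ₘ Γ) Δ (.cons (.node Y Φ Ψ ts) .nil)])
  /-- `R□`. -/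
  | boxR (C : NCtx) (X : Multiset ℕ) (Γ Δ : Multiset Fml) (A : Fml) :
      C.holes = 1 →
      Step L [C.fill [.node X Γ Δ (.cons (.node 0 0 {A} .nil) .nil)]]
        (C.fill [.node X Γ (Fml.box A ::ₘ Δ) .nil])
  /-- `Ref`. -/
  | ref (C : NCtx) (X : Multiset ℕ) (Γ Δ : Multiset Fml) (x : ℕ) :
      C.holes = 1 →
      Step L [C.fill [.node X (Fml.eq x x ::ₘ Γ) Δ .nil]] (C.fill [.node X Γ Δ .nil])
  /-- `Repl` (with `P` atomic). -/
  | repl (C : NCtx) (X : Multiset ℕ) (Γ Δ : Multiset Fml) (x y z : ℕ) (P : Fml) :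
      C.holes = 1 → P.Atomic →
      Step L [C.fill [.node X (P.sub y z ::ₘ Fml.eq x y ::ₘ P.sub x z ::ₘ Γ) Δ .nil]]
        (C.fill [.node X (Fml.eq x y ::ₘ P.sub x z ::ₘ Γ) Δ .nil])
  /-- `Repl_X`. -/
  | replX (C : NCtx) (X : Multiset ℕ) (Γ Δ : Multiset Fml) (x y : ℕ) :
      C.holes = 1 →
      Step L [C.fill [.node (x ::ₘ y ::ₘ X) (Fml.eq x y ::ₘ Γ) Δ .nil]]
        (C.fill [.node (x ::ₘ X) (Fml.eq x y ::ₘ Γ) Δ .nil])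
  /-- `Rig`. -/
  | rig (C : NCtx) (X Y : Multiset ℕ) (Γ Δ Φ Ψ : Multiset Fml) (x y : ℕ) :
      C.holes = 2 →
      Step L [C.fill [.node X (Fml.eq x y ::ₘ Γ) Δ .nil, .node Y (Fml.eq x y ::ₘ Φ) Ψ .nil]]
        (C.fill [.node X (Fml.eq x y ::ₘ Γ) Δ .nil, .node Y Φ Ψ .nil])
  /-- `R_D`. -/
  | rD (C : NCtx) (X : Multiset ℕ) (Γ Δ : Multiset Fml) :
      Ax.D ∈ L → C.holes = 1 →
      Step L [C.fill [.node X Γ Δ (.cons (.node 0 0 0 .nil) .nil)]]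
        (C.fill [.node X Γ Δ .nil])
  /-- `R_T`. -/
  | rT (C : NCtx) (X : Multiset ℕ) (Γ Δ : Multiset Fml) (A : Fml) :
      Ax.T ∈ L → C.holes = 1 →
      Step L [C.fill [.node X (A ::ₘ Fml.box A ::ₘ Γ) Δ .nil]]
        (C.fill [.node X (Fml.box A ::ₘ Γ) Δ .nil])
  /-- `R_B`. -/
  | rB (C : NCtx) (X Y : Multiset ℕ) (Γ Δ Φ Ψ : Multiset Fml) (ts : NSeqs) (A : Fml) :
      Ax.B ∈ L → C.holes = 1 →
      Step L [C.fill [.node X (A ::ₘ Γ) Δ (.cons (.node Y (Fml.box A ::ₘ Φ) Ψ ts) .nil)]]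
        (C.fill [.node X Γ Δ (.cons (.node Y (Fml.box A ::ₘ Φ) Ψ ts) .nil)])
  /-- `R_4`. -/
  | r4 (C : NCtx) (X Y : Multiset ℕ) (Γ Δ Φ Ψ : Multiset Fml) (ts : NSeqs) (A : Fml) :
      Ax.four ∈ L → C.holes = 1 →
      Step L [C.fill [.node X (Fml.box A ::ₘ Γ) Δ (.cons (.node Y (Fml.box A ::ₘ Φ) Ψ ts) .nil)]]
        (C.fill [.node X (Fml.box A ::ₘ Γ) Δ (.cons (.node Y Φ Ψ ts) .nil)])
  /-- `R_5`, with the side condition that the second hole has depth ≥ 1. -/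
  | r5 (C : NCtx) (X Y : Multiset ℕ) (Γ Δ Φ Ψ : Multiset Fml) (A : Fml) :
      Ax.five ∈ L → (∃ d₁ d₂, C.holeDepths = [d₁, d₂] ∧ 1 ≤ d₂) →
      Step L [C.fill [.node X (Fml.box A ::ₘ Γ) Δ .nil, .node Y (Fml.box A ::ₘ Φ) Ψ .nil]]
        (C.fill [.node X (Fml.box A ::ₘ Γ) Δ .nil, .node Y Φ Ψ .nil])
  /-- `R_cbf`. -/
  | rcbf (C : NCtx) (X Y : Multiset ℕ) (Γ Δ Φ Ψ : Multiset Fml) (ts : NSeqs) (x : ℕ) :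
      Ax.cbf ∈ L → C.holes = 1 →
      Step L [C.fill [.node (x ::ₘ X) Γ Δ (.cons (.node (x ::ₘ Y) Φ Ψ ts) .nil)]]
        (C.fill [.node (x ::ₘ X) Γ Δ (.cons (.node Y Φ Ψ ts) .nil)])
  /-- `R_bf`. -/
  | rbf (C : NCtx) (X Y : Multiset ℕ) (Γ Δ Φ Ψ : Multiset Fml) (ts : NSeqs) (x : ℕ) :
      Ax.bf ∈ L → C.holes = 1 →
      Step L [C.fill [.node (x ::ₘ X) Γ Δ (.cons (.node (x ::ₘ Y) Φ Ψ ts) .nil)]]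
        (C.fill [.node X Γ Δ (.cons (.node (x ::ₘ Y) Φ Ψ ts) .nil)])
  /-- `R_ui`. -/
  | rui (C : NCtx) (X : Multiset ℕ) (Γ Δ : Multiset Fml) (x : ℕ) :
      Ax.ui ∈ L → C.holes = 1 →
      Step L [C.fill [.node (x ::ₘ X) Γ Δ .nil]] (C.fill [.node X Γ Δ .nil])
  /-- `R_5dom`, present iff `5 ∈ L` and `{CBF, BF} ∩ L ≠ ∅`; both holes have depth ≥ 1. -/
  | r5dom (C : NCtx) (X Y : Multiset ℕ) (Γ Δ Φ Ψ : Multiset Fml) (x : ℕ) :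
      Ax.five ∈ L → (Ax.cbf ∈ L ∨ Ax.bf ∈ L) →
      (∃ d₁ d₂, C.holeDepths = [d₁, d₂] ∧ 1 ≤ d₁ ∧ 1 ≤ d₂) →
      Step L [C.fill [.node (x ::ₘ X) Γ Δ .nil, .node (x ::ₘ Y) Φ Ψ .nil]]
        (C.fill [.node (x ::ₘ X) Γ Δ .nil, .node Y Φ Ψ .nil])

/-- `Deriv L n S`: the nested sequent `S` is derivable in `NQ.L` with a derivation of
height at most `n`. -/
inductive Deriv (L : Set Ax) : ℕ → NSeq → Prop
  | step {n : ℕ} {ps : List NSeq} {S : NSeq} :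
      Step L ps S → (∀ p ∈ ps, Deriv L n p) → Deriv L (n + 1) S

/-- `S` is `NQ.L`-derivable. -/
def Derivable (L : Set Ax) (S : NSeq) : Prop := ∃ n, Deriv L n S

end NQML

namespace NQML

namespace Aux
open Fml

abbrev Leaf := ℕ ⊕ ℕ

inductive DB : Type
  | rel : ℕ → List Leaf → DB
  | eq : Leaf → Leaf → DB
  | bot : DB
  | imp : DB → DB → DB
  | all : DB → DB
  | box : DB → DB
  deriving DecidableEq

def idx : List ℕ → ℕ → Option ℕ
  | [], _ => none
  | a :: l, v => if v = a then some 0 else (idx l v).map (· + 1)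

def evalL (env : List ℕ) (v : ℕ) : Leaf :=
  match idx env v with
  | some i => Sum.inl i
  | none => Sum.inr v

def trans : List ℕ → Fml → DB
  | env, .rel n l => .rel n (l.map (evalL env))
  | env, .eq a b => .eq (evalL env a) (evalL env b)
  | _, .bot => .bot
  | env, .imp A B => .imp (trans env A) (trans env B)
  | env, .all z A => .all (trans (z :: env) A)
  | env, .box A => .box (trans env A)

def lsh : Leaf → Leaf
  | .inl i => .inl (i+1)
  | .inr v => .inr v

def liftF (f : Leaf → Leaf) : Leaf → Leaf
  | .inl 0 => .inl 0
  | .inl (i+1) => lsh (f (.inl i))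
  | .inr v => lsh (f (.inr v))

def leafMap (f : Leaf → Leaf) : DB → DB
  | .rel n l => .rel n (l.map f)
  | .eq a b => .eq (f a) (f b)
  | .bot => .bot
  | .imp s t => .imp (leafMap f s) (leafMap f t)
  | .all t => .all (leafMap (liftF f) t)
  | .box t => .box (leafMap f t)

lemma liftF_lsh (f : Leaf → Leaf) (e : Leaf) : liftF f (lsh e) = lsh (f e) := by
  cases e <;> simp [lsh, liftF]

lemma liftF_comp (f g : Leaf → Leaf) : liftF (f ∘ g) = liftF f ∘ liftF g := by
  funext e
  rcases e with (_ | i) | v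
  · rfl
  · show lsh ((f ∘ g) (.inl i)) = liftF f (lsh (g (.inl i)))
    rw [liftF_lsh]; rfl
  · show lsh ((f ∘ g) (.inr v)) = liftF f (lsh (g (.inr v)))
    rw [liftF_lsh]; rfl

lemma leafMap_comp (f g : Leaf → Leaf) (t : DB) :
    leafMap f (leafMap g t) = leafMap (f ∘ g) t := by
  induction t generalizing f g with
  | rel n l => simp [leafMap, List.map_map]
  | eq a b => simp [leafMap]
  | bot => rfl
  | imp s t ihs iht => simp [leafMap, ihs, iht]
  | all t ih => simp [leafMap, ih, liftF_comp]
  | box t ih => simp [leafMap, ih]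

/-- the canonical bound variable chosen by `substF` at a binder. -/
def newVar (σ : ℕ → ℕ) (z : ℕ) (A : Fml) : ℕ :=
  if z ∈ ((fv A).erase z).image σ then (((fv A).erase z).image σ).sup id + 1 else z

lemma substF_all (σ : ℕ → ℕ) (z : ℕ) (A : Fml) :
    substF σ (.all z A) = .all (newVar σ z A) (substF (Function.update σ z (newVar σ z A)) A) := by
  simp [substF, newVar]

lemma newVar_spec {σ : ℕ → ℕ} {z : ℕ} {A : Fml} {v : ℕ} (hv : v ∈ fv A) (hvz : v ≠ z) :
    σ v ≠ newVar σ z A := by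
  have hmem : σ v ∈ ((fv A).erase z).image σ :=
    Finset.mem_image_of_mem σ (Finset.mem_erase.2 ⟨hvz, hv⟩)
  unfold newVar
  split
  · intro h
    have := Finset.le_sup (f := id) hmem
    simp only [id] at this
    omega
  · rename_i hniz
    intro h
    exact hniz (h ▸ hmem)

lemma evalL_cons_self (z : ℕ) (env : List ℕ) : evalL (z :: env) z = Sum.inl 0 := by
  simp [evalL, idx]

lemma evalL_cons_ne {v z : ℕ} (h : v ≠ z) (env : List ℕ) :
    evalL (z :: env) v = lsh (evalL env v) := by
  simp only [evalL, idx, if_neg h]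
  cases idx env v <;> simp [lsh]

/-- Key lemma T*: `trans` after `substF` is a leaf map of `trans`. -/
lemma trans_substF (A : Fml) (σ : ℕ → ℕ) (env env' : List ℕ) (f : Leaf → Leaf)
    (h : ∀ v ∈ fv A, evalL env' (σ v) = f (evalL env v)) :
    trans env' (substF σ A) = leafMap f (trans env A) := by
  induction A generalizing σ env env' f with
  | rel n l =>
      simp only [substF, trans, leafMap, List.map_map]
      exact congrArg _ (List.map_congr_left fun v hv => h v (by simp [fv, List.mem_toFinset, hv]))
  | eq a b =>
      simp only [substF, trans, leafMap]
      rw [h a (by simp [fv]), h b (by simp [fv])]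
  | bot => rfl
  | imp A B ihA ihB =>
      simp only [substF, trans, leafMap]
      rw [ihA _ _ _ _ fun v hv => h v (by simp [fv, hv]),
          ihB _ _ _ _ fun v hv => h v (by simp [fv, hv])]
  | box A ih =>
      simp only [substF, trans, leafMap]
      rw [ih _ _ _ _ fun v hv => h v (by simpa [fv] using hv)]
  | all z A ih =>
      rw [substF_all]
      simp only [trans, leafMap]
      rw [ih (Function.update σ z (newVar σ z A)) (z :: env) (newVar σ z A :: env') (liftF f) ?_]
      intro v hv
      by_cases hvz : v = z
      · subst hvz
        simp [Function.update_self, evalL_cons_self, liftF]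
      · rw [Function.update_of_ne hvz, evalL_cons_ne (newVar_spec hv hvz) env',
          evalL_cons_ne hvz env, liftF_lsh, h v (by simp [fv, Finset.mem_erase, hvz, hv])]

/-- Extensionality of `leafMap` over reachable leaves of `trans env A`. -/
lemma leafMap_trans_congr (A : Fml) (env : List ℕ) (f f' : Leaf → Leaf)
    (h : ∀ v ∈ fv A, f (evalL env v) = f' (evalL env v)) :
    leafMap f (trans env A) = leafMap f' (trans env A) := by
  induction A generalizing env f f' with
  | rel n l =>
      simp only [trans, leafMap, List.map_map]
      exact congrArg _ (List.map_congr_left fun v hv => h v (by simp [fv, List.mem_toFinset, hv]))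
  | eq a b =>
      simp only [trans, leafMap]
      rw [h a (by simp [fv]), h b (by simp [fv])]
  | bot => rfl
  | imp A B ihA ihB =>
      simp only [trans, leafMap]
      rw [ihA _ _ _ fun v hv => h v (by simp [fv, hv]),
          ihB _ _ _ fun v hv => h v (by simp [fv, hv])]
  | box A ih =>
      simp only [trans, leafMap]
      rw [ih _ _ _ fun v hv => h v (by simpa [fv] using hv)]
  | all z A ih =>
      simp only [trans, leafMap]
      rw [ih (z :: env) (liftF f) (liftF f') ?_]
      intro v hv
      by_cases hvz : v = z
      · subst hvz; simp [evalL_cons_self, liftF]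
      · rw [evalL_cons_ne hvz, liftF_lsh, liftF_lsh,
          h v (by simp [fv, Finset.mem_erase, hvz, hv])]

end Aux
namespace Aux
open Fml

def freeNames : DB → Finset ℕ
  | .rel _ l => (l.filterMap (fun e => e.getRight?)).toFinset
  | .eq a b => (([a,b]).filterMap (fun e => e.getRight?)).toFinset
  | .bot => ∅
  | .imp s t => freeNames s ∪ freeNames t
  | .all t => freeNames t
  | .box t => freeNames t

lemma getRight_evalL (env : List ℕ) (v : ℕ) :
    (evalL env v).getRight? = if v ∈ env then none else some v := by
  induction env with
  | nil => simp [evalL, idx, Sum.getRight?]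
  | cons a l ih =>
      by_cases hva : v = a
      · subst hva; simp [evalL_cons_self, Sum.getRight?]
      · rw [evalL_cons_ne hva]
        have : (lsh (evalL l v)).getRight? = (evalL l v).getRight? := by
          cases h : evalL l v <;> simp [lsh, Sum.getRight?]
        rw [this, ih]
        simp [List.mem_cons, hva]

lemma freeNames_trans (A : Fml) (env : List ℕ) :
    freeNames (trans env A) = fv A \ env.toFinset := by
  induction A generalizing env with
  | rel n l =>
      ext v
      simp only [trans, freeNames, List.mem_toFinset, List.mem_filterMap, List.mem_map,
        fv, Finset.mem_sdiff]
      constructor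
      · rintro ⟨e, ⟨w, hw, rfl⟩, he⟩
        rw [getRight_evalL] at he
        by_cases hwe : w ∈ env
        · rw [if_pos hwe] at he; cases he
        · rw [if_neg hwe] at he; cases he
          exact ⟨by simpa using hw, by simpa using hwe⟩
      · rintro ⟨hv, hnv⟩
        refine ⟨evalL env v, ⟨v, by simpa using hv, rfl⟩, ?_⟩
        rw [getRight_evalL, if_neg (by simpa using hnv)]
  | eq a b =>
      ext v
      simp only [trans, freeNames, List.mem_toFinset, List.mem_filterMap, fv, Finset.mem_sdiff]
      constructor
      · rintro ⟨e, he, hg⟩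
        simp only [List.mem_cons, List.not_mem_nil, or_false] at he
        have hex : ∃ w, (w = a ∨ w = b) ∧ e = evalL env w := by
          rcases he with rfl | rfl
          exacts [⟨a, Or.inl rfl, rfl⟩, ⟨b, Or.inr rfl, rfl⟩]
        rcases hex with ⟨w, hw, rfl⟩
        rw [getRight_evalL] at hg
        by_cases hwe : w ∈ env
        · rw [if_pos hwe] at hg; cases hg
        · rw [if_neg hwe] at hg; cases hg
          refine ⟨by rcases hw with rfl | rfl <;> simp, by simpa using hwe⟩
      · rintro ⟨hv, hnv⟩
        simp only [Finset.mem_insert, Finset.mem_singleton] at hv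
        refine ⟨evalL env v, ?_, by rw [getRight_evalL, if_neg (by simpa using hnv)]⟩
        rcases hv with rfl | rfl <;> simp
  | bot => simp [trans, freeNames, fv]
  | imp A B ihA ihB =>
      simp [trans, freeNames, fv, ihA, ihB, Finset.union_sdiff_distrib]
  | box A ih => simpa [trans, freeNames, fv] using ih env
  | all z A ih =>
      simp only [trans, freeNames, fv, ih (z :: env)]
      ext v
      simp only [Finset.mem_sdiff, List.toFinset_cons, Finset.mem_insert, Finset.mem_erase,
        List.mem_toFinset]
      tauto

lemma fv_substF (σ : ℕ → ℕ) (A : Fml) : fv (substF σ A) = (fv A).image σ := by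
  induction A generalizing σ with
  | rel n l => ext v; simp [substF, fv, List.mem_toFinset]
  | eq a b => ext v; simp [substF, fv]; try tauto
  | bot => simp [substF, fv]
  | imp A B ihA ihB => simp [substF, fv, ihA, ihB, Finset.image_union]
  | box A ih => simpa [substF, fv] using ih σ
  | all z A ih =>
      rw [substF_all]
      simp only [fv, ih]
      ext w
      simp only [Finset.mem_erase, Finset.mem_image]
      constructor
      · rintro ⟨hw, v, hv, rfl⟩
        by_cases hvz : v = z
        · exfalso; subst hvz; rw [Function.update_self] at hw; exact hw rfl
        · rw [Function.update_of_ne hvz] at hw ⊢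
          exact ⟨v, ⟨hvz, hv⟩, rfl⟩
      · rintro ⟨v, ⟨hvz, hvA⟩, rfl⟩
        exact ⟨newVar_spec hvA hvz, v, hvA, by rw [Function.update_of_ne hvz]⟩

lemma substF_congr {σ τ : ℕ → ℕ} (A : Fml) (h : ∀ v ∈ fv A, σ v = τ v) :
    substF σ A = substF τ A := by
  induction A generalizing σ τ with
  | rel n l =>
      simp only [substF]
      congr 1
      exact List.map_congr_left fun v hv => h v (by simp [fv, List.mem_toFinset, hv])
  | eq a b => simp only [substF]; rw [h a (by simp [fv]), h b (by simp [fv])]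
  | bot => rfl
  | imp A B ihA ihB =>
      simp only [substF]
      rw [ihA fun v hv => h v (by simp [fv, hv]), ihB fun v hv => h v (by simp [fv, hv])]
  | box A ih => simp only [substF]; rw [ih fun v hv => h v (by simpa [fv] using hv)]
  | all z A ih =>
      have hcap : ((fv A).erase z).image σ = ((fv A).erase z).image τ :=
        Finset.image_congr fun v hv => h v (by simpa only [fv, Finset.mem_coe] using hv)
      have hnv : newVar σ z A = newVar τ z A := by unfold newVar; rw [hcap]
      rw [substF_all, substF_all, hnv]
      refine congrArg _ (ih fun v hv => ?_)
      by_cases hvz : v = z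
      · subst hvz; simp [Function.update_self]
      · rw [Function.update_of_ne hvz, Function.update_of_ne hvz]
        exact h v (by simp [fv, Finset.mem_erase, hvz, hv])

lemma substF_id (A : Fml) : substF id A = A := by
  induction A with
  | rel n l => simp [substF]
  | eq a b => simp [substF]
  | bot => rfl
  | imp A B ihA ihB => simp [substF, ihA, ihB]
  | box A ih => simp [substF, ih]
  | all z A ih =>
      have hnv : newVar id z A = z := by
        unfold newVar
        split
        · rename_i hmem; exfalso; simp only [Finset.image_id] at hmem
          exact (Finset.mem_erase.1 hmem).1 rfl
        · rfl
      rw [substF_all, hnv]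
      have : Function.update (id : ℕ → ℕ) z z = id := by
        funext w; by_cases hw : w = z
        · subst hw; simp
        · simp [Function.update_of_ne hw]
      rw [this, ih]

lemma substF_id_of_fv {σ : ℕ → ℕ} (A : Fml) (h : ∀ v ∈ fv A, σ v = v) : substF σ A = A := by
  rw [substF_congr A (τ := id) h, substF_id]

/-- `mf σ`: the leaf map renaming free names by `σ`. -/
def mf (σ : ℕ → ℕ) : Leaf → Leaf
  | .inl i => .inl i
  | .inr v => .inr (σ v)

lemma trans_substF_nil (σ : ℕ → ℕ) (A : Fml) :
    trans [] (substF σ A) = leafMap (mf σ) (trans [] A) :=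
  trans_substF A σ [] [] (mf σ) (fun v _ => by simp [evalL, idx, mf])

/-- α-equivalence. -/
def aeq (A B : Fml) : Prop := trans [] A = trans [] B

lemma aeq_refl (A : Fml) : aeq A A := rfl
lemma aeq_symm {A B : Fml} (h : aeq A B) : aeq B A := h.symm
lemma aeq_trans {A B C : Fml} (h1 : aeq A B) (h2 : aeq B C) : aeq A C := h1.trans h2

lemma aeq_fv {A B : Fml} (h : aeq A B) : fv A = fv B := by
  have h1 := freeNames_trans A []
  have h2 := freeNames_trans B []
  simp only [List.toFinset_nil, Finset.sdiff_empty] at h1 h2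
  rw [← h1, ← h2, h]

lemma aeq_substF {A B : Fml} (σ : ℕ → ℕ) (h : aeq A B) : aeq (substF σ A) (substF σ B) := by
  unfold aeq
  rw [trans_substF_nil, trans_substF_nil, h]

lemma aeq_substF_comp (σ τ : ℕ → ℕ) (A : Fml) :
    aeq (substF σ (substF τ A)) (substF (σ ∘ τ) A) := by
  unfold aeq
  rw [trans_substF_nil, trans_substF_nil, trans_substF_nil, leafMap_comp]
  refine leafMap_trans_congr _ _ _ _ fun v _ => ?_
  cases evalL [] v <;> rfl

end Aux
namespace Aux
open Fml

lemma evalL_nil (v : ℕ) : evalL [] v = Sum.inr v := rfl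

lemma evalL_single (x v : ℕ) : evalL [x] v = if v = x then Sum.inl 0 else Sum.inr v := by
  by_cases h : v = x
  · subst h; simp [evalL_cons_self]
  · rw [evalL_cons_ne h]; simp [h, evalL_nil, lsh]

/-- subfun: `A.sub y x = substF (subfun y x) A`. -/
def subfun (y x : ℕ) : ℕ → ℕ := fun v => if v = x then y else v

lemma sub_eq (A : Fml) (y x : ℕ) : A.sub y x = substF (subfun y x) A := rfl

/-- de Bruijn instantiation leaf map. -/
def instF (w x : ℕ) : Leaf → Leaf
  | .inl 0 => .inr w
  | .inl (i+1) => .inl i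
  | .inr v => if v = x then .inr w else .inr v

lemma trans_sub (A : Fml) (w x : ℕ) :
    trans [] (A.sub w x) = leafMap (instF w x) (trans [x] A) := by
  rw [sub_eq]
  refine trans_substF A (subfun w x) [x] [] (instF w x) fun v _ => ?_
  by_cases hvx : v = x
  · subst hvx; simp [subfun, evalL_single, evalL_nil, instF]
  · simp [subfun, hvx, evalL_single, evalL_nil, instF]

lemma aeq_sub_of_trans_eq {A1 A2 : Fml} {x1 x2 : ℕ} (h : trans [x1] A1 = trans [x2] A2)
    (u : ℕ) : aeq (A1.sub u x1) (A2.sub u x2) := by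
  unfold aeq
  rw [trans_sub, trans_sub, h]
  refine leafMap_trans_congr A2 [x2] _ _ fun v hv => ?_
  rw [evalL_single]
  by_cases hvx : v = x2
  · rw [if_pos hvx]; rfl
  · rw [if_neg hvx]
    have hfn : fv A1 \ {x1} = fv A2 \ {x2} := by
      have h1 := freeNames_trans A1 [x1]
      have h2 := freeNames_trans A2 [x2]
      simp only [List.toFinset_cons, List.toFinset_nil, LawfulSingleton.insert_empty_eq] at h1 h2
      rw [← h1, ← h2, h]
    have hvx1 : v ≠ x1 := by
      intro hc
      have : v ∈ fv A1 \ {x1} := hfn ▸ Finset.mem_sdiff.2 ⟨hv, by simpa using hvx⟩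
      simp [hc] at this
    show instF u x1 (.inr v) = instF u x2 (.inr v)
    simp [instF, hvx, hvx1]

lemma trans_substF_update (σ : ℕ → ℕ) (x : ℕ) (A : Fml) :
    trans [newVar σ x A] (substF (Function.update σ x (newVar σ x A)) A)
      = leafMap (mf σ) (trans [x] A) := by
  refine trans_substF A _ [x] [newVar σ x A] (mf σ) fun v hv => ?_
  by_cases hvx : v = x
  · subst hvx; simp [Function.update_self, evalL_single, evalL_cons_self, mf]
  · rw [Function.update_of_ne hvx]
    simp only [evalL_single, if_neg hvx, mf]
    rw [if_neg (newVar_spec hv hvx)]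

/-- Key commutation lemma for quantifier rules. -/
lemma aeq_sub_commute (σ τ : ℕ → ℕ) (w u x : ℕ) (A : Fml)
    (hτ : ∀ v ∈ fv A, v ≠ x → τ v = σ v) (hw : τ w = u) :
    aeq (substF τ (A.sub w x))
      ((substF (Function.update σ x (newVar σ x A)) A).sub u (newVar σ x A)) := by
  unfold aeq
  rw [trans_substF_nil, trans_sub, leafMap_comp, trans_sub, trans_substF_update, leafMap_comp]
  refine leafMap_trans_congr A [x] _ _ fun v hv => ?_
  rw [evalL_single]
  by_cases hvx : v = x
  · rw [if_pos hvx]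
    show mf τ (instF w x (.inl 0)) = instF u (newVar σ x A) (mf σ (.inl 0))
    simp [instF, mf, hw]
  · rw [if_neg hvx]
    show mf τ (instF w x (.inr v)) = instF u (newVar σ x A) (mf σ (.inr v))
    simp only [instF, mf, if_neg hvx]
    rw [hτ v hv hvx]
    show Sum.inr (σ v) = instF u (newVar σ x A) (.inr (σ v))
    simp [instF, newVar_spec hv hvx]

/-- Inversion lemmas for α-equivalence. -/
lemma aeq_bot_inv {B : Fml} (h : aeq B .bot) : B = .bot := by
  cases B <;> first | rfl | (exact absurd h (by unfold aeq trans; intro hc; cases hc))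

lemma aeq_imp_inv {B A1 A2 : Fml} (h : aeq B (.imp A1 A2)) :
    ∃ B1 B2, B = .imp B1 B2 ∧ aeq B1 A1 ∧ aeq B2 A2 := by
  cases B <;> unfold aeq trans at h <;> try (exact absurd h (by intro hc; cases hc))
  case imp B1 B2 =>
    injection h with h1 h2
    exact ⟨B1, B2, rfl, h1, h2⟩

lemma aeq_box_inv {B A : Fml} (h : aeq B (.box A)) :
    ∃ B1, B = .box B1 ∧ aeq B1 A := by
  cases B <;> unfold aeq trans at h <;> try (exact absurd h (by intro hc; cases hc))
  case box B1 =>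
    injection h with h1
    exact ⟨B1, rfl, h1⟩

lemma aeq_all_inv {B : Fml} {x : ℕ} {A : Fml} (h : aeq B (.all x A)) :
    ∃ xb Ab, B = .all xb Ab ∧ trans [xb] Ab = trans [x] A := by
  cases B <;> unfold aeq trans at h <;> try (exact absurd h (by intro hc; cases hc))
  case all xb Ab =>
    injection h with h1
    exact ⟨xb, Ab, rfl, h1⟩

lemma aeq_atomic_inv {B A : Fml} (hA : A.Atomic) (h : aeq B A) : B = A := by
  cases A
  case bot => exact hA.elim
  case imp => exact hA.elim
  case all => exact hA.elim
  case box => exact hA.elim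
  case rel n l =>
    cases B
    case rel n' l' =>
      unfold aeq trans at h
      injection h with h1 h2
      have hls : l' = l := by
        have hinj : Function.Injective (evalL []) := by
          intro a b hab
          simpa [evalL_nil] using hab
        exact List.map_injective_iff.2 hinj h2
      rw [h1, hls]
    all_goals (unfold aeq trans at h; exact absurd h (by intro hc; cases hc))
  case eq a b =>
    cases B
    case eq a' b' =>
      unfold aeq trans at h
      injection h with h1 h2
      simp only [evalL_nil] at h1 h2
      injection h1 with h1; injection h2 with h2
      rw [h1, h2]
    all_goals (unfold aeq trans at h; exact absurd h (by intro hc; cases hc))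

lemma atomic_substF {P : Fml} (hP : P.Atomic) (σ : ℕ → ℕ) : (substF σ P).Atomic := by
  cases P <;> simp_all [Fml.Atomic, Fml.substF]

lemma substF_comp_atomic {P : Fml} (hP : P.Atomic) (σ τ : ℕ → ℕ) :
    substF σ (substF τ P) = substF (σ ∘ τ) P := by
  cases P <;> simp_all [Fml.Atomic, Fml.substF, List.map_map]

end Aux
namespace Aux
open Fml

/-- The basic formula relation: `B` is α-equivalent to `substF σ A`. -/
def rF (σ : ℕ → ℕ) (A B : Fml) : Prop := aeq (substF σ A) B

/-- Lifted to multisets. -/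
def rM (σ : ℕ → ℕ) : Multiset Fml → Multiset Fml → Prop := Multiset.Rel (rF σ)

lemma rM_refl (Γ : Multiset Fml) : rM id Γ Γ := by
  induction Γ using Multiset.induction with
  | empty => exact Multiset.Rel.zero
  | cons A Γ ih => exact Multiset.Rel.cons (by rw [rF, substF_id]; exact aeq_refl A) ih

lemma rM_congr {σ σ' : ℕ → ℕ} {Γ Γ' : Multiset Fml} (h : rM σ Γ Γ')
    (hσ : ∀ v ∈ msFv Γ, σ v = σ' v) : rM σ' Γ Γ' := by
  induction Γ using Multiset.induction generalizing Γ' with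
  | empty => rwa [rM, Multiset.rel_zero_left] at h ⊢
  | cons A Γ ih =>
      rw [rM, Multiset.rel_cons_left] at h
      obtain ⟨B, Γ'', hAB, hrest, rfl⟩ := h
      refine Multiset.Rel.cons ?_ (ih hrest fun v hv => hσ v ?_)
      · rw [rF] at hAB ⊢
        rwa [substF_congr A fun v hv => (hσ v (by
          simp only [msFv, Multiset.map_cons, Multiset.sup_cons]
          exact Finset.mem_union.2 (Or.inl hv))).symm]
      · simp only [msFv, Multiset.map_cons, Multiset.sup_cons] at hv ⊢
        exact Finset.mem_union.2 (Or.inr hv)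

lemma rM_add {σ : ℕ → ℕ} {Γ1 Γ2 Γ1' Γ2' : Multiset Fml} (h1 : rM σ Γ1 Γ1') (h2 : rM σ Γ2 Γ2') :
    rM σ (Γ1 + Γ2) (Γ1' + Γ2') := Multiset.Rel.add h1 h2

lemma rM_add_inv {σ : ℕ → ℕ} {Γ1 Γ2 Γ' : Multiset Fml} (h : rM σ (Γ1 + Γ2) Γ') :
    ∃ Γ1' Γ2', Γ' = Γ1' + Γ2' ∧ rM σ Γ1 Γ1' ∧ rM σ Γ2 Γ2' := by
  rw [rM, Multiset.rel_add_left] at h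
  obtain ⟨Γ1', Γ2', h1, h2, rfl⟩ := h
  exact ⟨Γ1', Γ2', rfl, h1, h2⟩

lemma rM_cons_inv {σ : ℕ → ℕ} {A : Fml} {Γ Γ' : Multiset Fml} (h : rM σ (A ::ₘ Γ) Γ') :
    ∃ B Γ'', Γ' = B ::ₘ Γ'' ∧ rF σ A B ∧ rM σ Γ Γ'' := by
  rw [rM, Multiset.rel_cons_left] at h
  obtain ⟨B, Γ'', hAB, hrest, rfl⟩ := h
  exact ⟨B, Γ'', rfl, hAB, hrest⟩

/-- Signature relation: `X' = X.map σ + W` for some extra `W`. -/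
def rX (σ : ℕ → ℕ) (X X' : Multiset ℕ) : Prop := ∃ W, X' = X.map σ + W

lemma rX_refl (X : Multiset ℕ) : rX id X X := ⟨0, by simp⟩

lemma rX_congr {σ σ' : ℕ → ℕ} {X X' : Multiset ℕ} (h : rX σ X X')
    (hσ : ∀ v ∈ X, σ v = σ' v) : rX σ' X X' := by
  obtain ⟨W, rfl⟩ := h
  exact ⟨W, by rw [Multiset.map_congr rfl hσ]⟩

lemma rX_add_inv {σ : ℕ → ℕ} {X1 X2 X' : Multiset ℕ} (h : rX σ (X1 + X2) X') :
    ∃ X1' X2', X' = X1' + X2' ∧ rX σ X1 X1' ∧ rX σ X2 X2' := by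
  obtain ⟨W, rfl⟩ := h
  exact ⟨X1.map σ, X2.map σ + W, by rw [Multiset.map_add, add_assoc], ⟨0, by simp⟩, ⟨W, rfl⟩⟩

lemma rX_add {σ : ℕ → ℕ} {X1 X2 X1' X2' : Multiset ℕ} (h1 : rX σ X1 X1') (h2 : rX σ X2 X2') :
    rX σ (X1 + X2) (X1' + X2') := by
  obtain ⟨W1, rfl⟩ := h1; obtain ⟨W2, rfl⟩ := h2
  exact ⟨W1 + W2, by rw [Multiset.map_add]; exact add_add_add_comm _ _ _ _⟩

lemma rX_cons_inv {σ : ℕ → ℕ} {x : ℕ} {X X' : Multiset ℕ} (h : rX σ (x ::ₘ X) X') :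
    ∃ X'', X' = σ x ::ₘ X'' ∧ rX σ X X'' := by
  obtain ⟨W, rfl⟩ := h
  exact ⟨X.map σ + W, by rw [Multiset.map_cons, Multiset.cons_add], ⟨W, rfl⟩⟩

lemma rX_cons {σ : ℕ → ℕ} {x : ℕ} {X X' : Multiset ℕ} (h : rX σ X X') :
    rX σ (x ::ₘ X) (σ x ::ₘ X') := by
  obtain ⟨W, rfl⟩ := h
  exact ⟨W, by rw [Multiset.map_cons, Multiset.cons_add]⟩

-- The master relation on nested sequents.
mutual
  def AW (σ : ℕ → ℕ) : NSeq → NSeq → Prop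
    | .node X Γ Δ cs, .node X' Γ' Δ' cs' =>
        rX σ X X' ∧ rM σ Γ Γ' ∧ rM σ Δ Δ' ∧ AWl σ cs cs'
  def AWl (σ : ℕ → ℕ) : NSeqs → NSeqs → Prop
    | .nil, .nil => True
    | .cons s ss, .cons s' ss' => AW σ s s' ∧ AWl σ ss ss'
    | .nil, .cons _ _ => False
    | .cons _ _, .nil => False
end

-- The master relation on contexts (number of holes preserved nodewise).
mutual
  def CAW (σ : ℕ → ℕ) : NCtx → NCtx → Prop
    | .node X Γ Δ k cs, .node X' Γ' Δ' k' cs' =>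
        k' = k ∧ rX σ X X' ∧ rM σ Γ Γ' ∧ rM σ Δ Δ' ∧ CAWl σ cs cs'
  def CAWl (σ : ℕ → ℕ) : NCtxs → NCtxs → Prop
    | .nil, .nil => True
    | .cons c cs, .cons c' cs' => CAW σ c c' ∧ CAWl σ cs cs'
    | .nil, .cons _ _ => False
    | .cons _ _, .nil => False
end

mutual
  theorem AW_refl (s : NSeq) : AW id s s := by
    match s with
    | .node X Γ Δ cs =>
        exact ⟨rX_refl X, rM_refl Γ, rM_refl Δ, AWl_refl cs⟩
  theorem AWl_refl (ss : NSeqs) : AWl id ss ss := by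
    match ss with
    | .nil => exact trivial
    | .cons s ss => exact ⟨AW_refl s, AWl_refl ss⟩
end

mutual
  theorem CAW_refl (c : NCtx) : CAW id c c := by
    match c with
    | .node X Γ Δ k cs =>
        exact ⟨rfl, rX_refl X, rM_refl Γ, rM_refl Δ, CAWl_refl cs⟩
  theorem CAWl_refl (cs : NCtxs) : CAWl id cs cs := by
    match cs with
    | .nil => exact trivial
    | .cons c cs => exact ⟨CAW_refl c, CAWl_refl cs⟩
end

end Aux
namespace Aux
open Fml

lemma NSeqs_append_def (a b : NSeqs) : a ++ b = NSeqs.append a b := rfl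

lemma NSeqs_nil_append (b : NSeqs) : NSeqs.nil ++ b = b := rfl

lemma NSeqs_cons_append (s : NSeq) (a b : NSeqs) :
    NSeqs.cons s a ++ b = NSeqs.cons s (a ++ b) := rfl

lemma NSeqs_append_nil (a : NSeqs) : a ++ NSeqs.nil = a := by
  match a with
  | .nil => rfl
  | .cons s ss => rw [NSeqs_cons_append, NSeqs_append_nil ss]

lemma AWl_append {σ : ℕ → ℕ} : ∀ {a a' b b' : NSeqs}, AWl σ a a' → AWl σ b b' →
    AWl σ (a ++ b) (a' ++ b')
  | .nil, .nil, _, _, _, h2 => h2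
  | .nil, .cons _ _, _, _, h1, _ => h1.elim
  | .cons _ _, .nil, _, _, h1, _ => h1.elim
  | .cons s ss, .cons s' ss', b, b', h1, h2 => by
      rw [NSeqs_cons_append, NSeqs_cons_append]
      exact ⟨h1.1, AWl_append h1.2 h2⟩

lemma AWl_append_inv {σ : ℕ → ℕ} : ∀ (a : NSeqs) {b t : NSeqs}, AWl σ (a ++ b) t →
    ∃ a' b', t = a' ++ b' ∧ AWl σ a a' ∧ AWl σ b b'
  | .nil, b, t, h => ⟨.nil, t, rfl, trivial, h⟩
  | .cons s ss, b, t, h => by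
      rw [NSeqs_cons_append] at h
      cases t with
      | nil => exact h.elim
      | cons t1 ts =>
          obtain ⟨a', b', rfl, h1, h2⟩ := AWl_append_inv ss h.2
          exact ⟨.cons t1 a', b', rfl, ⟨h.1, h1⟩, h2⟩

lemma merge_AW {σ : ℕ → ℕ} {a a' b b' : NSeq} (h1 : AW σ a a') (h2 : AW σ b b') :
    AW σ (a.merge b) (a'.merge b') := by
  obtain ⟨X, Γ, Δ, cs⟩ := a; obtain ⟨X', Γ', Δ', cs'⟩ := a'
  obtain ⟨Y, Φ, Ψ, ds⟩ := b; obtain ⟨Y', Φ', Ψ', ds'⟩ := b'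
  obtain ⟨hX, hΓ, hΔ, hcs⟩ := h1
  obtain ⟨hY, hΦ, hΨ, hds⟩ := h2
  exact ⟨rX_add hX hY, rM_add hΓ hΦ, rM_add hΔ hΨ, AWl_append hcs hds⟩

lemma merge_AW_inv {σ : ℕ → ℕ} {a b t : NSeq} (h : AW σ (a.merge b) t) :
    ∃ a' b', t = a'.merge b' ∧ AW σ a a' ∧ AW σ b b' := by
  obtain ⟨X, Γ, Δ, cs⟩ := a; obtain ⟨Y, Φ, Ψ, ds⟩ := b; obtain ⟨Z, Θ, Ξ, es⟩ := t
  obtain ⟨hX, hΓ, hΔ, hcs⟩ := h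
  obtain ⟨X1, X2, rfl, hX1, hX2⟩ := rX_add_inv hX
  obtain ⟨Γ1, Γ2, rfl, hΓ1, hΓ2⟩ := rM_add_inv hΓ
  obtain ⟨Δ1, Δ2, rfl, hΔ1, hΔ2⟩ := rM_add_inv hΔ
  obtain ⟨e1, e2, rfl, he1, he2⟩ := AWl_append_inv cs hcs
  exact ⟨.node X1 Γ1 Δ1 e1, .node X2 Γ2 Δ2 e2, rfl, ⟨hX1, hΓ1, hΔ1, he1⟩, ⟨hX2, hΓ2, hΔ2, he2⟩⟩

lemma foldl_AW {σ : ℕ → ℕ} {L L' : List NSeq} (h : List.Forall₂ (AW σ) L L') :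
    ∀ {b b'}, AW σ b b' → AW σ (L.foldl NSeq.merge b) (L'.foldl NSeq.merge b') := by
  induction h with
  | nil => exact fun hb => hb
  | cons h1 _ ih => exact fun hb => ih (merge_AW hb h1)

lemma foldl_AW_inv {σ : ℕ → ℕ} :
    ∀ (L : List NSeq) {b t : NSeq}, AW σ (L.foldl NSeq.merge b) t →
      ∃ b' L', t = L'.foldl NSeq.merge b' ∧ AW σ b b' ∧ List.Forall₂ (AW σ) L L' := by
  intro L
  induction L with
  | nil => exact fun h => ⟨_, [], rfl, h, List.Forall₂.nil⟩
  | cons u us ih =>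
      intro b t h
      obtain ⟨b1, us', rfl, hb1, hus⟩ := ih h
      obtain ⟨b', u', rfl, hb, hu⟩ := merge_AW_inv hb1
      exact ⟨b', u' :: us', rfl, hb, List.Forall₂.cons hu hus⟩

mutual
  theorem CAW_holes {σ : ℕ → ℕ} (C C' : NCtx) (h : CAW σ C C') : NCtx.holes C' = NCtx.holes C := by
    match C, C' with
    | .node X Γ Δ k cs, .node X' Γ' Δ' k' cs' =>
        obtain ⟨hk, _, _, _, hcs⟩ := h
        unfold NCtx.holes
        rw [hk, CAWl_holes cs cs' hcs]
  theorem CAWl_holes {σ : ℕ → ℕ} (cs cs' : NCtxs) (h : CAWl σ cs cs') :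
      NCtxs.holes cs' = NCtxs.holes cs := by
    match cs, cs' with
    | .nil, .nil => rfl
    | .nil, .cons _ _ => exact h.elim
    | .cons _ _, .nil => exact h.elim
    | .cons c cs, .cons c' cs' =>
        unfold NCtxs.holes
        rw [CAW_holes c c' h.1, CAWl_holes cs cs' h.2]
end


mutual
  theorem fill_AW {σ : ℕ → ℕ} (C C' : NCtx) (L L' : List NSeq)
      (hC : CAW σ C C') (hL : List.Forall₂ (AW σ) L L') :
      AW σ (C.fill L) (C'.fill L') := by
    match C, C' with
    | .node X Γ Δ k cs, .node X' Γ' Δ' k' cs' =>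
        obtain ⟨hk, hX, hΓ, hΔ, hcs⟩ := hC
        unfold NCtx.fill
        rw [hk]
        refine foldl_AW (List.forall₂_take k hL) ?_
        show AW σ (.node X Γ Δ _) (.node X' Γ' Δ' _)
        exact ⟨hX, hΓ, hΔ, fills_AW cs cs' _ _ hcs (List.forall₂_drop k hL)⟩
  theorem fills_AW {σ : ℕ → ℕ} (cs cs' : NCtxs) (L L' : List NSeq)
      (hC : CAWl σ cs cs') (hL : List.Forall₂ (AW σ) L L') :
      AWl σ (NCtxs.fill cs L) (NCtxs.fill cs' L') := by
    match cs, cs' with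
    | .nil, .nil => exact trivial
    | .nil, .cons _ _ => exact hC.elim
    | .cons _ _, .nil => exact hC.elim
    | .cons c cs, .cons c' cs' =>
        obtain ⟨hc, hcs⟩ := hC
        have hh : NCtx.holes c' = NCtx.holes c := CAW_holes c c' hc
        unfold NCtxs.fill
        rw [hh]
        exact ⟨fill_AW c c' _ _ hc (List.forall₂_take _ hL),
          fills_AW cs cs' _ _ hcs (List.forall₂_drop _ hL)⟩
end

mutual
  theorem CAW_holeDepths {σ : ℕ → ℕ} (C C' : NCtx) (h : CAW σ C C') :
      NCtx.holeDepths C' = NCtx.holeDepths C := by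
    match C, C' with
    | .node X Γ Δ k cs, .node X' Γ' Δ' k' cs' =>
        obtain ⟨hk, _, _, _, hcs⟩ := h
        unfold NCtx.holeDepths
        rw [hk, CAWl_holeDepths cs cs' hcs]
  theorem CAWl_holeDepths {σ : ℕ → ℕ} (cs cs' : NCtxs) (h : CAWl σ cs cs') :
      NCtxs.holeDepths cs' = NCtxs.holeDepths cs := by
    match cs, cs' with
    | .nil, .nil => rfl
    | .nil, .cons _ _ => exact h.elim
    | .cons _ _, .nil => exact h.elim
    | .cons c cs, .cons c' cs' =>
        unfold NCtxs.holeDepths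
        rw [CAW_holeDepths c c' h.1, CAWl_holeDepths cs cs' h.2]
end

mutual
  theorem fill_AW_inv {σ : ℕ → ℕ} (C : NCtx) (L : List NSeq) (T : NSeq)
      (h : AW σ (C.fill L) T) (hlen : L.length = C.holes) :
      ∃ C' L', T = C'.fill L' ∧ CAW σ C C' ∧ List.Forall₂ (AW σ) L L' := by
    match C with
    | .node X Γ Δ k cs =>
        unfold NCtx.fill at h
        obtain ⟨b', us', rfl, hb, hus⟩ := foldl_AW_inv _ h
        match b', hb with
        | .node X' Γ' Δ' ds, hb =>
            obtain ⟨hX, hΓ, hΔ, hds⟩ := hb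
            have hdlen : (L.drop k).length = NCtxs.holes cs := by
              unfold NCtx.holes at hlen
              rw [List.length_drop]
              omega
            obtain ⟨cs', M', rfl, hcs, hM⟩ := fills_AW_inv cs (L.drop k) ds hds hdlen
            refine ⟨.node X' Γ' Δ' k cs', us' ++ M', ?_, ⟨rfl, hX, hΓ, hΔ, hcs⟩, ?_⟩
            · unfold NCtx.fill
              have hus_len : us'.length = k := by
                have := hus.length_eq
                rw [List.length_take] at this
                unfold NCtx.holes at hlen
                omega
              rw [List.take_left' hus_len, List.drop_left' hus_len]
            · have h1 : List.Forall₂ (AW σ) (L.take k) us' := hus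
              have h2 : List.Forall₂ (AW σ) (L.drop k) M' := hM
              simpa only [List.take_append_drop] using List.rel_append h1 h2
  theorem fills_AW_inv {σ : ℕ → ℕ} (cs : NCtxs) (L : List NSeq) (T : NSeqs)
      (h : AWl σ (NCtxs.fill cs L) T) (hlen : L.length = NCtxs.holes cs) :
      ∃ cs' L', T = NCtxs.fill cs' L' ∧ CAWl σ cs cs' ∧ List.Forall₂ (AW σ) L L' := by
    match cs with
    | .nil =>
        have : L = [] := List.eq_nil_of_length_eq_zero (by rw [hlen]; rfl)
        subst this
        cases T with
        | nil => exact ⟨.nil, [], rfl, trivial, List.Forall₂.nil⟩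
        | cons _ _ => exact h.elim
    | .cons c cs =>
        unfold NCtxs.fill at h
        cases T with
        | nil => exact h.elim
        | cons t ts =>
            obtain ⟨h1, h2⟩ := h
            have hlen1 : (L.take (NCtx.holes c)).length = NCtx.holes c := by
              rw [List.length_take]
              unfold NCtxs.holes at hlen
              omega
            have hlen2 : (L.drop (NCtx.holes c)).length = NCtxs.holes cs := by
              rw [List.length_drop]
              unfold NCtxs.holes at hlen
              omega
            obtain ⟨c', L1', rfl, hc, hL1⟩ := fill_AW_inv c _ t h1 hlen1
            obtain ⟨cs', L2', rfl, hcs, hL2⟩ := fills_AW_inv cs _ ts h2 hlen2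
            refine ⟨.cons c' cs', L1' ++ L2', ?_, ⟨hc, hcs⟩, ?_⟩
            · unfold NCtxs.fill
              have hL1len : L1'.length = NCtx.holes c := by
                rw [← hL1.length_eq, hlen1]
              rw [CAW_holes c c' hc, List.take_left' hL1len, List.drop_left' hL1len]
              cases cs' <;> rfl
            · simpa only [List.take_append_drop] using List.rel_append hL1 hL2
end

end Aux
namespace Aux
open Fml

lemma msFv_cons (A : Fml) (Γ : Multiset Fml) : msFv (A ::ₘ Γ) = fv A ∪ msFv Γ := by
  simp [msFv, Multiset.map_cons, Multiset.sup_cons]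

lemma msFv_add (Γ Δ : Multiset Fml) : msFv (Γ + Δ) = msFv Γ ∪ msFv Δ := by
  simp [msFv, Multiset.map_add]

lemma mem_msFv {v : ℕ} {Γ : Multiset Fml} : v ∈ msFv Γ ↔ ∃ A ∈ Γ, v ∈ fv A := by
  induction Γ using Multiset.induction with
  | empty => simp [msFv]
  | cons A Γ ih =>
      rw [msFv_cons]
      simp [ih]

mutual
  def ctxFv : NCtx → Finset ℕ
    | .node X Γ Δ _ cs => X.toFinset ∪ msFv Γ ∪ msFv Δ ∪ ctxFvl cs
  def ctxFvl : NCtxs → Finset ℕ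
    | .nil => ∅
    | .cons c cs => ctxFv c ∪ ctxFvl cs
end

def fvList (L : List NSeq) : Finset ℕ := L.foldr (fun s acc => NSeq.fv s ∪ acc) ∅

lemma fvList_append (L M : List NSeq) : fvList (L ++ M) = fvList L ∪ fvList M := by
  induction L with
  | nil => simp [fvList]
  | cons s L ih =>
      simp only [fvList, List.foldr_cons, List.cons_append] at *
      rw [ih, Finset.union_assoc]

lemma fv_NSeqs_append (a b : NSeqs) : NSeqs.fv (a ++ b) = NSeqs.fv a ∪ NSeqs.fv b := by
  match a with
  | .nil => simp [NSeqs.fv, NSeqs_nil_append]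
  | .cons s ss =>
      rw [NSeqs_cons_append]
      show NSeq.fv s ∪ NSeqs.fv (ss ++ b) = NSeq.fv s ∪ NSeqs.fv ss ∪ NSeqs.fv b
      rw [fv_NSeqs_append ss b, Finset.union_assoc]

lemma fv_merge (a b : NSeq) : NSeq.fv (a.merge b) = NSeq.fv a ∪ NSeq.fv b := by
  obtain ⟨X, Γ, Δ, cs⟩ := a; obtain ⟨Y, Φ, Ψ, ds⟩ := b
  show (X + Y).toFinset ∪ msFv (Γ + Φ) ∪ msFv (Δ + Ψ) ∪ NSeqs.fv (cs ++ ds) = _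
  rw [Multiset.toFinset_add, msFv_add, msFv_add, fv_NSeqs_append]
  show _ = X.toFinset ∪ msFv Γ ∪ msFv Δ ∪ NSeqs.fv cs ∪ (Y.toFinset ∪ msFv Φ ∪ msFv Ψ ∪ NSeqs.fv ds)
  ext v; simp only [Finset.mem_union]; tauto

lemma fv_foldl (L : List NSeq) : ∀ (b : NSeq),
    NSeq.fv (L.foldl NSeq.merge b) = NSeq.fv b ∪ fvList L := by
  induction L with
  | nil => intro b; simp [fvList]
  | cons u us ih =>
      intro b
      simp only [List.foldl_cons, ih, fv_merge, fvList, List.foldr_cons]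
      rw [Finset.union_assoc]

mutual
  theorem fv_fill (C : NCtx) (L : List NSeq) (hlen : L.length = NCtx.holes C) :
      NSeq.fv (C.fill L) = ctxFv C ∪ fvList L := by
    match C with
    | .node X Γ Δ k cs =>
        unfold NCtx.fill
        rw [fv_foldl]
        have hdlen : (L.drop k).length = NCtxs.holes cs := by
          rw [List.length_drop]; unfold NCtx.holes at hlen; omega
        show X.toFinset ∪ msFv Γ ∪ msFv Δ ∪ NSeqs.fv (NCtxs.fill cs (L.drop k)) ∪ _ = _
        rw [fvs_fill cs (L.drop k) hdlen]
        show _ = X.toFinset ∪ msFv Γ ∪ msFv Δ ∪ ctxFvl cs ∪ fvList L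
        conv_rhs => rw [← List.take_append_drop k L, fvList_append]
        ext v; simp only [Finset.mem_union]; tauto
  theorem fvs_fill (cs : NCtxs) (L : List NSeq) (hlen : L.length = NCtxs.holes cs) :
      NSeqs.fv (NCtxs.fill cs L) = ctxFvl cs ∪ fvList L := by
    match cs with
    | .nil =>
        have : L = [] := List.eq_nil_of_length_eq_zero (by rw [hlen]; rfl)
        subst this
        simp [NCtxs.fill, NSeqs.fv, ctxFvl, fvList]
    | .cons c cs =>
        unfold NCtxs.fill
        have h1 : (L.take c.holes).length = NCtx.holes c := by
          rw [List.length_take]; unfold NCtxs.holes at hlen; omega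
        have h2 : (L.drop c.holes).length = NCtxs.holes cs := by
          rw [List.length_drop]; unfold NCtxs.holes at hlen; omega
        show NSeq.fv (c.fill (L.take c.holes)) ∪ NSeqs.fv (NCtxs.fill cs (L.drop c.holes)) = _
        rw [fv_fill c _ h1, fvs_fill cs _ h2]
        show _ = ctxFv c ∪ ctxFvl cs ∪ fvList L
        conv_rhs => rw [← List.take_append_drop c.holes L, fvList_append]
        ext v; simp only [Finset.mem_union]; tauto
end

mutual
  theorem AW_congr {σ σ' : ℕ → ℕ} (s t : NSeq) (h : AW σ s t)
      (hσ : ∀ v ∈ NSeq.fv s, σ v = σ' v) : AW σ' s t := by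
    match s, t with
    | .node X Γ Δ cs, .node X' Γ' Δ' cs' =>
        obtain ⟨hX, hΓ, hΔ, hcs⟩ := h
        refine ⟨rX_congr hX fun v hv => hσ v ?_, rM_congr hΓ fun v hv => hσ v ?_,
          rM_congr hΔ fun v hv => hσ v ?_, AWls_congr cs cs' hcs fun v hv => hσ v ?_⟩
        all_goals {
          show v ∈ X.toFinset ∪ msFv Γ ∪ msFv Δ ∪ NSeqs.fv cs
          simp only [Finset.mem_union]
          first
          | exact Or.inl (Or.inl (Or.inl (Multiset.mem_toFinset.2 hv)))
          | exact Or.inl (Or.inl (Or.inr hv))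
          | exact Or.inl (Or.inr hv)
          | exact Or.inr hv
        }
  theorem AWls_congr {σ σ' : ℕ → ℕ} (ss ts : NSeqs) (h : AWl σ ss ts)
      (hσ : ∀ v ∈ NSeqs.fv ss, σ v = σ' v) : AWl σ' ss ts := by
    match ss, ts with
    | .nil, .nil => exact trivial
    | .nil, .cons _ _ => exact h.elim
    | .cons _ _, .nil => exact h.elim
    | .cons s ss, .cons t ts =>
        refine ⟨AW_congr s t h.1 fun v hv => hσ v ?_, AWls_congr ss ts h.2 fun v hv => hσ v ?_⟩
        · show v ∈ NSeq.fv s ∪ NSeqs.fv ss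
          exact Finset.mem_union.2 (Or.inl hv)
        · show v ∈ NSeq.fv s ∪ NSeqs.fv ss
          exact Finset.mem_union.2 (Or.inr hv)
end

mutual
  theorem CAW_congr {σ σ' : ℕ → ℕ} (c c' : NCtx) (h : CAW σ c c')
      (hσ : ∀ v ∈ ctxFv c, σ v = σ' v) : CAW σ' c c' := by
    match c, c' with
    | .node X Γ Δ k cs, .node X' Γ' Δ' k' cs' =>
        obtain ⟨hk, hX, hΓ, hΔ, hcs⟩ := h
        refine ⟨hk, rX_congr hX fun v hv => hσ v ?_, rM_congr hΓ fun v hv => hσ v ?_,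
          rM_congr hΔ fun v hv => hσ v ?_, CAWls_congr cs cs' hcs fun v hv => hσ v ?_⟩
        all_goals {
          show v ∈ X.toFinset ∪ msFv Γ ∪ msFv Δ ∪ ctxFvl cs
          simp only [Finset.mem_union]
          first
          | exact Or.inl (Or.inl (Or.inl (Multiset.mem_toFinset.2 hv)))
          | exact Or.inl (Or.inl (Or.inr hv))
          | exact Or.inl (Or.inr hv)
          | exact Or.inr hv
        }
  theorem CAWls_congr {σ σ' : ℕ → ℕ} (cs cs' : NCtxs) (h : CAWl σ cs cs')
      (hσ : ∀ v ∈ ctxFvl cs, σ v = σ' v) : CAWl σ' cs cs' := by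
    match cs, cs' with
    | .nil, .nil => exact trivial
    | .nil, .cons _ _ => exact h.elim
    | .cons _ _, .nil => exact h.elim
    | .cons c cs, .cons c' cs' =>
        refine ⟨CAW_congr c c' h.1 fun v hv => hσ v ?_, CAWls_congr cs cs' h.2 fun v hv => hσ v ?_⟩
        · show v ∈ ctxFv c ∪ ctxFvl cs
          exact Finset.mem_union.2 (Or.inl hv)
        · show v ∈ ctxFv c ∪ ctxFvl cs
          exact Finset.mem_union.2 (Or.inr hv)
end

end Aux
namespace Aux
open Fml

lemma rF_refl (σ : ℕ → ℕ) (A : Fml) : rF σ A (substF σ A) := aeq_refl _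

lemma rM_zero (σ : ℕ → ℕ) : rM σ 0 0 := Multiset.Rel.zero

lemma rM_zero_inv {σ : ℕ → ℕ} {t : Multiset Fml} (h : rM σ 0 t) : t = 0 := by
  rwa [rM, Multiset.rel_zero_left] at h

lemma rM_cons {σ : ℕ → ℕ} {A B Γ Γ'} (h1 : rF σ A B) (h2 : rM σ Γ Γ') :
    rM σ (A ::ₘ Γ) (B ::ₘ Γ') := Multiset.Rel.cons h1 h2

lemma rX_zero (σ : ℕ → ℕ) : rX σ 0 0 := ⟨0, by simp⟩

lemma AWl_nil_inv {σ : ℕ → ℕ} {t : NSeqs} (h : AWl σ .nil t) : t = .nil := by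
  cases t with
  | nil => rfl
  | cons _ _ => exact h.elim

lemma AWl_cons_inv {σ : ℕ → ℕ} {s : NSeq} {ss t : NSeqs} (h : AWl σ (.cons s ss) t) :
    ∃ u us, t = .cons u us ∧ AW σ s u ∧ AWl σ ss us := by
  cases t with
  | nil => exact h.elim
  | cons u us => exact ⟨u, us, rfl, h.1, h.2⟩

lemma AW_node_inv {σ : ℕ → ℕ} {X Γ Δ cs t} (h : AW σ (.node X Γ Δ cs) t) :
    ∃ X' Γ' Δ' cs', t = .node X' Γ' Δ' cs' ∧ rX σ X X' ∧ rM σ Γ Γ' ∧ rM σ Δ Δ' ∧ AWl σ cs cs' := by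
  cases t with
  | node X' Γ' Δ' cs' => exact ⟨X', Γ', Δ', cs', rfl, h.1, h.2.1, h.2.2.1, h.2.2.2⟩

lemma F2_single_inv {r : NSeq → NSeq → Prop} {a : NSeq} {L : List NSeq}
    (h : List.Forall₂ r [a] L) : ∃ b, L = [b] ∧ r a b := by
  cases h with
  | cons h1 h2 => cases h2 with
    | nil => exact ⟨_, rfl, h1⟩

lemma F2_pair_inv {r : NSeq → NSeq → Prop} {a1 a2 : NSeq} {L : List NSeq}
    (h : List.Forall₂ r [a1, a2] L) : ∃ b1 b2, L = [b1, b2] ∧ r a1 b1 ∧ r a2 b2 := by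
  cases h with
  | cons h1 h2 => cases h2 with
    | cons h3 h4 => cases h4 with
      | nil => exact ⟨_, _, rfl, h1, h3⟩

lemma AW_fill_one_inv {σ : ℕ → ℕ} {C : NCtx} {s : NSeq} {T : NSeq}
    (hC : NCtx.holes C = 1) (h : AW σ (C.fill [s]) T) :
    ∃ C' t, T = C'.fill [t] ∧ CAW σ C C' ∧ AW σ s t ∧ NCtx.holes C' = 1 ∧
      NCtx.holeDepths C' = NCtx.holeDepths C := by
  obtain ⟨C', L', rfl, hCC, hLL⟩ := fill_AW_inv C [s] T h (by simp [hC])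
  obtain ⟨t, rfl, hst⟩ := F2_single_inv hLL
  exact ⟨C', t, rfl, hCC, hst, (CAW_holes _ _ hCC).trans hC, CAW_holeDepths _ _ hCC⟩

lemma AW_fill_two_inv {σ : ℕ → ℕ} {C : NCtx} {s1 s2 : NSeq} {T : NSeq}
    (hC : NCtx.holes C = 2) (h : AW σ (C.fill [s1, s2]) T) :
    ∃ C' t1 t2, T = C'.fill [t1, t2] ∧ CAW σ C C' ∧ AW σ s1 t1 ∧ AW σ s2 t2 ∧
      NCtx.holes C' = 2 ∧ NCtx.holeDepths C' = NCtx.holeDepths C := by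
  obtain ⟨C', L', rfl, hCC, hLL⟩ := fill_AW_inv C [s1, s2] T h (by simp [hC])
  obtain ⟨t1, t2, rfl, h1, h2⟩ := F2_pair_inv hLL
  exact ⟨C', t1, t2, rfl, hCC, h1, h2, (CAW_holes _ _ hCC).trans hC, CAW_holeDepths _ _ hCC⟩

lemma AW_fill_one {σ : ℕ → ℕ} {C C' : NCtx} {s t : NSeq} (hC : CAW σ C C') (h : AW σ s t) :
    AW σ (C.fill [s]) (C'.fill [t]) :=
  fill_AW C C' [s] [t] hC (List.Forall₂.cons h List.Forall₂.nil)

lemma AW_fill_two {σ : ℕ → ℕ} {C C' : NCtx} {s1 t1 s2 t2 : NSeq} (hC : CAW σ C C')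
    (h1 : AW σ s1 t1) (h2 : AW σ s2 t2) :
    AW σ (C.fill [s1, s2]) (C'.fill [t1, t2]) :=
  fill_AW C C' [s1, s2] [t1, t2] hC (List.Forall₂.cons h1 (List.Forall₂.cons h2 List.Forall₂.nil))

/-- rF-inversions. -/
lemma rF_bot_inv {σ : ℕ → ℕ} {B : Fml} (h : rF σ .bot B) : B = .bot :=
  aeq_bot_inv (aeq_symm h)

lemma rF_imp_inv {σ : ℕ → ℕ} {A1 A2 B : Fml} (h : rF σ (.imp A1 A2) B) :
    ∃ B1 B2, B = .imp B1 B2 ∧ rF σ A1 B1 ∧ rF σ A2 B2 := by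
  have h' : aeq B (.imp (substF σ A1) (substF σ A2)) := aeq_symm h
  obtain ⟨B1, B2, rfl, h1, h2⟩ := aeq_imp_inv h'
  exact ⟨B1, B2, rfl, aeq_symm h1, aeq_symm h2⟩

lemma rF_box_inv {σ : ℕ → ℕ} {A B : Fml} (h : rF σ (.box A) B) :
    ∃ B1, B = .box B1 ∧ rF σ A B1 := by
  have h' : aeq B (.box (substF σ A)) := aeq_symm h
  obtain ⟨B1, rfl, h1⟩ := aeq_box_inv h'
  exact ⟨B1, rfl, aeq_symm h1⟩

lemma rF_atomic_inv {σ : ℕ → ℕ} {P B : Fml} (hP : P.Atomic) (h : rF σ P B) :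
    B = substF σ P := aeq_atomic_inv (atomic_substF hP σ) (aeq_symm h)

lemma rF_eq_inv {σ : ℕ → ℕ} {a b : ℕ} {B : Fml} (h : rF σ (.eq a b) B) :
    B = .eq (σ a) (σ b) := rF_atomic_inv (show (Fml.eq a b).Atomic from trivial) h

lemma rF_all_inv {σ : ℕ → ℕ} {x : ℕ} {A B : Fml} (h : rF σ (.all x A) B) :
    ∃ xb Ab, B = .all xb Ab ∧
      trans [xb] Ab = trans [newVar σ x A] (substF (Function.update σ x (newVar σ x A)) A) := by
  rw [rF, substF_all] at h
  exact aeq_all_inv (aeq_symm h)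

/-- the two key rF facts for the quantifier cases -/
lemma rF_allL_premiss {σ : ℕ → ℕ} {x : ℕ} {A : Fml} {xb : ℕ} {Ab : Fml}
    (htr : trans [xb] Ab = trans [newVar σ x A] (substF (Function.update σ x (newVar σ x A)) A))
    (z : ℕ) : rF σ (A.sub z x) (Ab.sub (σ z) xb) := by
  have h1 := aeq_sub_commute σ σ z (σ z) x A (fun _ _ _ => rfl) rfl
  have h2 := aeq_sub_of_trans_eq htr (σ z)
  exact aeq_trans h1 (aeq_symm h2)

lemma rF_allR_premiss {σ : ℕ → ℕ} {x y y'' : ℕ} {A : Fml} {xb : ℕ} {Ab : Fml}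
    (htr : trans [xb] Ab = trans [newVar σ x A] (substF (Function.update σ x (newVar σ x A)) A))
    (hy : ∀ v ∈ fv A, v ≠ x → v ≠ y) :
    rF (Function.update σ y y'') (A.sub y x) (Ab.sub y'' xb) := by
  have h1 := aeq_sub_commute σ (Function.update σ y y'') y y'' x A
    (fun v hv hvx => Function.update_of_ne (hy v hv hvx) _ _) (Function.update_self _ _ _)
  have h2 := aeq_sub_of_trans_eq htr y''
  exact aeq_trans h1 (aeq_symm h2)

lemma exists_fresh (s : Finset ℕ) : ∃ y, y ∉ s := Infinite.exists_notMem_finset s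


mutual
  theorem NCtx_holes_eq_length_holeDepths (C : NCtx) :
      (NCtx.holeDepths C).length = NCtx.holes C := by
    match C with
    | .node X Γ Δ k cs =>
        unfold NCtx.holeDepths NCtx.holes
        rw [List.length_append, List.length_replicate, List.length_map,
          NCtxs_holes_eq_length_holeDepths cs]
  theorem NCtxs_holes_eq_length_holeDepths (cs : NCtxs) :
      (NCtxs.holeDepths cs).length = NCtxs.holes cs := by
    match cs with
    | .nil => rfl
    | .cons c cs =>
        unfold NCtxs.holeDepths NCtxs.holes
        rw [List.length_append, NCtx_holes_eq_length_holeDepths c,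
          NCtxs_holes_eq_length_holeDepths cs]
end


lemma AW_node {σ : ℕ → ℕ} {X X' : Multiset ℕ} {Γ Γ' Δ Δ' : Multiset Fml} {cs cs' : NSeqs}
    (hX : rX σ X X') (hΓ : rM σ Γ Γ') (hΔ : rM σ Δ Δ') (hcs : AWl σ cs cs') :
    AW σ (.node X Γ Δ cs) (.node X' Γ' Δ' cs') := ⟨hX, hΓ, hΔ, hcs⟩

lemma AWl_nil' {σ : ℕ → ℕ} : AWl σ .nil .nil := trivial

lemma AWl_cons' {σ : ℕ → ℕ} {s t : NSeq} {ss ts : NSeqs} (h : AW σ s t) (h2 : AWl σ ss ts) :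
    AWl σ (.cons s ss) (.cons t ts) := ⟨h, h2⟩

/-- height monotonicity of derivations -/
lemma Deriv.le {L : Set Ax} {n m : ℕ} {S : NSeq} (h : Deriv L n S) (hnm : n ≤ m) :
    Deriv L m S := by
  induction h generalizing m with
  | step hstep hps ih =>
      cases m with
      | zero => exact absurd hnm (by omega)
      | succ m => exact Deriv.step hstep fun p hp => ih p hp (by omega)

end Aux
namespace Aux
open Fml

theorem mega {L : Set Ax} {n : ℕ} {S : NSeq} (h : Deriv L n S) :
    ∀ (σ : ℕ → ℕ) (T : NSeq), AW σ S T → Deriv L n T := by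
  induction h with
  | @step n ps S hstep hps ih =>
    intro σ T hT
    cases hstep with
    | init C X Γ Δ P hC hP =>
        obtain ⟨C', t, rfl, hCC, hst, hC1, _⟩ := AW_fill_one_inv hC hT
        obtain ⟨X', Γt, Δt, cst, rfl, hX, hΓ, hΔ, hcs⟩ := AW_node_inv hst
        obtain rfl := AWl_nil_inv hcs
        obtain ⟨B1, Γ'', rfl, hB1, hΓ'⟩ := rM_cons_inv hΓ
        obtain ⟨B2, Δ'', rfl, hB2, hΔ'⟩ := rM_cons_inv hΔ
        obtain rfl := rF_atomic_inv hP hB1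
        obtain rfl := rF_atomic_inv hP hB2
        exact Deriv.step (Step.init C' X' Γ'' Δ'' (substF σ P) hC1 (atomic_substF hP σ))
          (fun p hp => absurd hp List.not_mem_nil)
    | botL C X Γ Δ hC =>
        obtain ⟨C', t, rfl, hCC, hst, hC1, _⟩ := AW_fill_one_inv hC hT
        obtain ⟨X', Γt, Δt, cst, rfl, hX, hΓ, hΔ, hcs⟩ := AW_node_inv hst
        obtain rfl := AWl_nil_inv hcs
        obtain ⟨B1, Γ'', rfl, hB1, hΓ'⟩ := rM_cons_inv hΓ
        obtain rfl := rF_bot_inv hB1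
        exact Deriv.step (Step.botL C' X' Γ'' Δt hC1)
          (fun p hp => absurd hp List.not_mem_nil)
    | impL C X Γ Δ A B hC =>
        obtain ⟨C', t, rfl, hCC, hst, hC1, _⟩ := AW_fill_one_inv hC hT
        obtain ⟨X', Γt, Δt, cst, rfl, hX, hΓ, hΔ, hcs⟩ := AW_node_inv hst
        obtain rfl := AWl_nil_inv hcs
        obtain ⟨B1, Γ'', rfl, hB1, hΓ'⟩ := rM_cons_inv hΓ
        obtain ⟨A', B', rfl, hA, hB⟩ := rF_imp_inv hB1
        have h1 : Deriv L n (C'.fill [.node X' Γ'' (A' ::ₘ Δt) .nil]) :=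
          ih _ (by simp) σ _ (AW_fill_one hCC (AW_node hX hΓ' (rM_cons hA hΔ) AWl_nil'))
        have h2 : Deriv L n (C'.fill [.node X' (B' ::ₘ Γ'') Δt .nil]) :=
          ih _ (by simp) σ _ (AW_fill_one hCC (AW_node hX (rM_cons hB hΓ') hΔ AWl_nil'))
        refine Deriv.step (Step.impL C' X' Γ'' Δt A' B' hC1) ?_
        intro p hp
        rcases List.mem_pair.mp hp with rfl | rfl
        · exact h1
        · exact h2
    | impR C X Γ Δ A B hC =>
        obtain ⟨C', t, rfl, hCC, hst, hC1, _⟩ := AW_fill_one_inv hC hT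
        obtain ⟨X', Γt, Δt, cst, rfl, hX, hΓ, hΔ, hcs⟩ := AW_node_inv hst
        obtain rfl := AWl_nil_inv hcs
        obtain ⟨B1, Δ'', rfl, hB1, hΔ'⟩ := rM_cons_inv hΔ
        obtain ⟨A', B', rfl, hA, hB⟩ := rF_imp_inv hB1
        have h1 : Deriv L n (C'.fill [.node X' (A' ::ₘ Γt) (B' ::ₘ Δ'') .nil]) :=
          ih _ (by simp) σ _ (AW_fill_one hCC (AW_node hX (rM_cons hA hΓ) (rM_cons hB hΔ') AWl_nil'))
        refine Deriv.step (Step.impR C' X' Γt Δ'' A' B' hC1) ?_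
        intro p hp
        rw [List.mem_singleton] at hp
        subst hp
        exact h1
    | allL C X Γ Δ x z A hC =>
        obtain ⟨C', t, rfl, hCC, hst, hC1, _⟩ := AW_fill_one_inv hC hT
        obtain ⟨X', Γt, Δt, cst, rfl, hX, hΓ, hΔ, hcs⟩ := AW_node_inv hst
        obtain rfl := AWl_nil_inv hcs
        obtain ⟨X'', rfl, hX'⟩ := rX_cons_inv hX
        obtain ⟨B1, Γ'', rfl, hB1, hΓ'⟩ := rM_cons_inv hΓ
        obtain ⟨xb, Ab, rfl, htr⟩ := rF_all_inv hB1
        have h1 : Deriv L n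
            (C'.fill [.node (σ z ::ₘ X'') (Ab.sub (σ z) xb ::ₘ .all xb Ab ::ₘ Γ'') Δt .nil]) :=
          ih _ (by simp) σ _ (AW_fill_one hCC
            (AW_node (rX_cons hX') (rM_cons (rF_allL_premiss htr z) (rM_cons hB1 hΓ')) hΔ AWl_nil'))
        refine Deriv.step (Step.allL C' X'' Γ'' Δt xb (σ z) Ab hC1) ?_
        intro p hp
        rw [List.mem_singleton] at hp
        subst hp
        exact h1
    | allR C X Γ Δ x y A hC hfresh =>
        obtain ⟨C', t, rfl, hCC, hst, hC1, _⟩ := AW_fill_one_inv hC hT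
        obtain ⟨X', Γt, Δt, cst, rfl, hX, hΓ, hΔ, hcs⟩ := AW_node_inv hst
        obtain rfl := AWl_nil_inv hcs
        obtain ⟨B1, Δ'', rfl, hB1, hΔ'⟩ := rM_cons_inv hΔ
        obtain ⟨xb, Ab, rfl, htr⟩ := rF_all_inv hB1
        -- unpack freshness of y in the old conclusion
        rw [fv_fill C _ (by simp [hC])] at hfresh
        simp only [Finset.mem_union, fvList, List.foldr_cons, List.foldr_nil, not_or] at hfresh
        obtain ⟨hyC, hynode, -⟩ := hfresh
        have hynode' : ¬(y ∈ X.toFinset ∨ y ∈ msFv Γ ∨ y ∈ msFv (.all x A ::ₘ Δ) ∨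
            y ∈ NSeqs.fv .nil) := by
          intro hmem
          apply hynode
          show y ∈ X.toFinset ∪ msFv Γ ∪ msFv (.all x A ::ₘ Δ) ∪ NSeqs.fv .nil
          simp only [Finset.mem_union]
          tauto
        push_neg at hynode'
        obtain ⟨hyX, hyΓ, hyΔA, -⟩ := hynode'
        rw [msFv_cons, Finset.mem_union] at hyΔA
        push_neg at hyΔA
        obtain ⟨hyA, hyΔ⟩ := hyΔA
        -- fresh eigenvariable for the new sequent
        obtain ⟨y'', hy''⟩ :=
          exists_fresh (NSeq.fv (C'.fill [.node X' Γt (.all xb Ab ::ₘ Δ'') .nil]))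
        set σ' := Function.update σ y y'' with hσ'
        have hupd : ∀ v : ℕ, v ≠ y → σ v = σ' v := by
          intro v hv
          rw [hσ', Function.update_of_ne hv]
        have hCC' : CAW σ' C C' := CAW_congr _ _ hCC fun v hv =>
          hupd v (fun hvy => hyC (hvy ▸ hv))
        have hXr : rX σ' (y ::ₘ X) (y'' ::ₘ X') := by
          have hb : rX σ' X X' := rX_congr hX fun v hv =>
            hupd v (fun hvy => hyX (hvy ▸ Multiset.mem_toFinset.2 hv))
          have := rX_cons (x := y) hb
          rwa [hσ', Function.update_self] at this
        have hΓr : rM σ' Γ Γt := rM_congr hΓ fun v hv => hupd v (fun hvy => hyΓ (hvy ▸ hv))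
        have hΔr : rM σ' Δ Δ'' := rM_congr hΔ' fun v hv => hupd v (fun hvy => hyΔ (hvy ▸ hv))
        have hhead : rF σ' (A.sub y x) (Ab.sub y'' xb) := by
          refine rF_allR_premiss htr ?_
          intro v hv hvx hvy
          subst hvy
          exact hyA (by simp only [fv, Finset.mem_erase]; exact ⟨hvx, hv⟩)
        have h1 : Deriv L n (C'.fill [.node (y'' ::ₘ X') Γt (Ab.sub y'' xb ::ₘ Δ'') .nil]) :=
          ih _ (by simp) σ' _ (AW_fill_one hCC' (AW_node hXr hΓr (rM_cons hhead hΔr) AWl_nil'))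
        refine Deriv.step (Step.allR C' X' Γt Δ'' xb y'' Ab hC1 hy'') ?_
        intro p hp
        rw [List.mem_singleton] at hp
        subst hp
        exact h1
    | boxL C X Y Γ Δ Φ Ψ ts A hC =>
        obtain ⟨C', t, rfl, hCC, hst, hC1, _⟩ := AW_fill_one_inv hC hT
        obtain ⟨X', Γt, Δt, cst, rfl, hX, hΓ, hΔ, hcs⟩ := AW_node_inv hst
        obtain ⟨u, us, rfl, hu, hus⟩ := AWl_cons_inv hcs
        obtain rfl := AWl_nil_inv hus
        obtain ⟨Y', Φ', Ψ', ts', rfl, hY, hΦ, hΨ, hts⟩ := AW_node_inv hu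
        obtain ⟨B1, Γ'', rfl, hB1, hΓ'⟩ := rM_cons_inv hΓ
        obtain ⟨A', rfl, hA⟩ := rF_box_inv hB1
        have h1 : Deriv L n (C'.fill [.node X' (.box A' ::ₘ Γ'') Δt
            (.cons (.node Y' (A' ::ₘ Φ') Ψ' ts') .nil)]) :=
          ih _ (by simp) σ _ (AW_fill_one hCC
            (AW_node hX (rM_cons hB1 hΓ') hΔ (AWl_cons' (AW_node hY (rM_cons hA hΦ) hΨ hts) AWl_nil')))
        refine Deriv.step (Step.boxL C' X' Y' Γ'' Δt Φ' Ψ' ts' A' hC1) ?_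
        intro p hp
        rw [List.mem_singleton] at hp
        subst hp
        exact h1
    | boxR C X Γ Δ A hC =>
        obtain ⟨C', t, rfl, hCC, hst, hC1, _⟩ := AW_fill_one_inv hC hT
        obtain ⟨X', Γt, Δt, cst, rfl, hX, hΓ, hΔ, hcs⟩ := AW_node_inv hst
        obtain rfl := AWl_nil_inv hcs
        obtain ⟨B1, Δ'', rfl, hB1, hΔ'⟩ := rM_cons_inv hΔ
        obtain ⟨A', rfl, hA⟩ := rF_box_inv hB1
        have h1 : Deriv L n (C'.fill [.node X' Γt Δ'' (.cons (.node 0 0 {A'} .nil) .nil)]) :=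
          ih _ (by simp) σ _ (AW_fill_one hCC
            (AW_node hX hΓ hΔ' (AWl_cons' (AW_node (rX_zero σ) (rM_zero σ) (rM_cons hA (rM_zero σ)) AWl_nil') AWl_nil')))
        refine Deriv.step (Step.boxR C' X' Γt Δ'' A' hC1) ?_
        intro p hp
        rw [List.mem_singleton] at hp
        subst hp
        exact h1
    | ref C X Γ Δ x hC =>
        obtain ⟨C', t, rfl, hCC, hst, hC1, _⟩ := AW_fill_one_inv hC hT
        obtain ⟨X', Γt, Δt, cst, rfl, hX, hΓ, hΔ, hcs⟩ := AW_node_inv hst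
        obtain rfl := AWl_nil_inv hcs
        have h1 : Deriv L n (C'.fill [.node X' (.eq (σ x) (σ x) ::ₘ Γt) Δt .nil]) :=
          ih _ (by simp) σ _ (AW_fill_one hCC
            (AW_node hX (rM_cons (rF_refl σ (.eq x x)) hΓ) hΔ AWl_nil'))
        refine Deriv.step (Step.ref C' X' Γt Δt (σ x) hC1) ?_
        intro p hp
        rw [List.mem_singleton] at hp
        subst hp
        exact h1
    | repl C X Γ Δ x y z P hC hP =>
        obtain ⟨C', t, rfl, hCC, hst, hC1, _⟩ := AW_fill_one_inv hC hT
        obtain ⟨X', Γt, Δt, cst, rfl, hX, hΓ, hΔ, hcs⟩ := AW_node_inv hst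
        obtain rfl := AWl_nil_inv hcs
        obtain ⟨B1, Γt2, rfl, hB1, hΓ2⟩ := rM_cons_inv hΓ
        obtain ⟨B2, Γ'', rfl, hB2, hΓ'⟩ := rM_cons_inv hΓ2
        obtain rfl := rF_eq_inv hB1
        have hPsub : (P.sub x z).Atomic := by rw [sub_eq]; exact atomic_substF hP _
        obtain rfl := rF_atomic_inv hPsub hB2
        obtain ⟨z'', hz''⟩ := exists_fresh ((fv P).image σ)
        have key : ∀ w : ℕ,
            (substF (fun v => if v = z then z'' else σ v) P).sub (σ w) z''
              = substF σ (P.sub w z) := by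
          intro w
          rw [sub_eq, sub_eq, substF_comp_atomic hP, substF_comp_atomic hP]
          refine substF_congr P fun v hv => ?_
          by_cases hvz : v = z
          · subst hvz
            simp [Function.comp, subfun]
          · have hσv : σ v ≠ z'' := fun hc => hz'' (hc ▸ Finset.mem_image_of_mem σ hv)
            simp [Function.comp, subfun, hvz, hσv]
        have h1 : Deriv L n (C'.fill [.node X'
            ((substF (fun v => if v = z then z'' else σ v) P).sub (σ y) z'' ::ₘ
              .eq (σ x) (σ y) ::ₘ
              (substF (fun v => if v = z then z'' else σ v) P).sub (σ x) z'' ::ₘ Γ'') Δt .nil]) := by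
          have hk1 : rF σ (P.sub y z)
              ((substF (fun v => if v = z then z'' else σ v) P).sub (σ y) z'') := by
            rw [rF, key y]; exact aeq_refl _
          have hk2 : rF σ (P.sub x z)
              ((substF (fun v => if v = z then z'' else σ v) P).sub (σ x) z'') := by
            rw [rF, key x]; exact aeq_refl _
          exact ih _ (by simp) σ _ (AW_fill_one hCC
            (AW_node hX (rM_cons hk1 (rM_cons hB1 (rM_cons hk2 hΓ'))) hΔ AWl_nil'))
        rw [← key x]
        refine Deriv.step (Step.repl C' X' Γ'' Δt (σ x) (σ y) z''
          (substF (fun v => if v = z then z'' else σ v) P) hC1 (atomic_substF hP _)) ?_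
        intro p hp
        rw [List.mem_singleton] at hp
        subst hp
        exact h1
    | replX C X Γ Δ x y hC =>
        obtain ⟨C', t, rfl, hCC, hst, hC1, _⟩ := AW_fill_one_inv hC hT
        obtain ⟨X', Γt, Δt, cst, rfl, hX, hΓ, hΔ, hcs⟩ := AW_node_inv hst
        obtain rfl := AWl_nil_inv hcs
        obtain ⟨X'', rfl, hX'⟩ := rX_cons_inv hX
        obtain ⟨B1, Γ'', rfl, hB1, hΓ'⟩ := rM_cons_inv hΓ
        obtain rfl := rF_eq_inv hB1
        have h1 : Deriv L n (C'.fill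
            [.node (σ x ::ₘ σ y ::ₘ X'') (.eq (σ x) (σ y) ::ₘ Γ'') Δt .nil]) :=
          ih _ (by simp) σ _ (AW_fill_one hCC
            (AW_node (rX_cons (rX_cons hX')) (rM_cons hB1 hΓ') hΔ AWl_nil'))
        refine Deriv.step (Step.replX C' X'' Γ'' Δt (σ x) (σ y) hC1) ?_
        intro p hp
        rw [List.mem_singleton] at hp
        subst hp
        exact h1
    | rig C X Y Γ Δ Φ Ψ x y hC =>
        obtain ⟨C', t1, t2, rfl, hCC, hs1, hs2, hC2, _⟩ := AW_fill_two_inv hC hT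
        obtain ⟨X', Γt, Δt, cst, rfl, hX, hΓ, hΔ, hcs⟩ := AW_node_inv hs1
        obtain rfl := AWl_nil_inv hcs
        obtain ⟨Y', Φt, Ψt, dst, rfl, hY, hΦ, hΨ, hds⟩ := AW_node_inv hs2
        obtain rfl := AWl_nil_inv hds
        obtain ⟨B1, Γ'', rfl, hB1, hΓ'⟩ := rM_cons_inv hΓ
        obtain rfl := rF_eq_inv hB1
        have h1 : Deriv L n (C'.fill [.node X' (.eq (σ x) (σ y) ::ₘ Γ'') Δt .nil,
            .node Y' (.eq (σ x) (σ y) ::ₘ Φt) Ψt .nil]) :=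
          ih _ (by simp) σ _ (AW_fill_two hCC
            (AW_node hX (rM_cons hB1 hΓ') hΔ AWl_nil')
            (AW_node hY (rM_cons hB1 hΦ) hΨ AWl_nil'))
        refine Deriv.step (Step.rig C' X' Y' Γ'' Δt Φt Ψt (σ x) (σ y) hC2) ?_
        intro p hp
        rw [List.mem_singleton] at hp
        subst hp
        exact h1
    | rD C X Γ Δ hD hC =>
        obtain ⟨C', t, rfl, hCC, hst, hC1, _⟩ := AW_fill_one_inv hC hT
        obtain ⟨X', Γt, Δt, cst, rfl, hX, hΓ, hΔ, hcs⟩ := AW_node_inv hst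
        obtain rfl := AWl_nil_inv hcs
        have h1 : Deriv L n (C'.fill [.node X' Γt Δt (.cons (.node 0 0 0 .nil) .nil)]) :=
          ih _ (by simp) σ _ (AW_fill_one hCC
            (AW_node hX hΓ hΔ (AWl_cons' (AW_node (rX_zero σ) (rM_zero σ) (rM_zero σ) AWl_nil') AWl_nil')))
        refine Deriv.step (Step.rD C' X' Γt Δt hD hC1) ?_
        intro p hp
        rw [List.mem_singleton] at hp
        subst hp
        exact h1
    | rT C X Γ Δ A hT' hC =>
        obtain ⟨C', t, rfl, hCC, hst, hC1, _⟩ := AW_fill_one_inv hC hT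
        obtain ⟨X', Γt, Δt, cst, rfl, hX, hΓ, hΔ, hcs⟩ := AW_node_inv hst
        obtain rfl := AWl_nil_inv hcs
        obtain ⟨B1, Γ'', rfl, hB1, hΓ'⟩ := rM_cons_inv hΓ
        obtain ⟨A', rfl, hA⟩ := rF_box_inv hB1
        have h1 : Deriv L n (C'.fill [.node X' (A' ::ₘ .box A' ::ₘ Γ'') Δt .nil]) :=
          ih _ (by simp) σ _ (AW_fill_one hCC
            (AW_node hX (rM_cons hA (rM_cons hB1 hΓ')) hΔ AWl_nil'))
        refine Deriv.step (Step.rT C' X' Γ'' Δt A' hT' hC1) ?_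
        intro p hp
        rw [List.mem_singleton] at hp
        subst hp
        exact h1
    | rB C X Y Γ Δ Φ Ψ ts A hB' hC =>
        obtain ⟨C', t, rfl, hCC, hst, hC1, _⟩ := AW_fill_one_inv hC hT
        obtain ⟨X', Γt, Δt, cst, rfl, hX, hΓ, hΔ, hcs⟩ := AW_node_inv hst
        obtain ⟨u, us, rfl, hu, hus⟩ := AWl_cons_inv hcs
        obtain rfl := AWl_nil_inv hus
        obtain ⟨Y', Φt, Ψt, ts', rfl, hY, hΦ, hΨ, hts⟩ := AW_node_inv hu
        obtain ⟨B1, Φ'', rfl, hB1, hΦ'⟩ := rM_cons_inv hΦ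
        obtain ⟨A', rfl, hA⟩ := rF_box_inv hB1
        have h1 : Deriv L n (C'.fill [.node X' (A' ::ₘ Γt) Δt
            (.cons (.node Y' (.box A' ::ₘ Φ'') Ψt ts') .nil)]) :=
          ih _ (by simp) σ _ (AW_fill_one hCC
            (AW_node hX (rM_cons hA hΓ) hΔ (AWl_cons' (AW_node hY (rM_cons hB1 hΦ') hΨ hts) AWl_nil')))
        refine Deriv.step (Step.rB C' X' Y' Γt Δt Φ'' Ψt ts' A' hB' hC1) ?_
        intro p hp
        rw [List.mem_singleton] at hp
        subst hp
        exact h1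
    | r4 C X Y Γ Δ Φ Ψ ts A h4 hC =>
        obtain ⟨C', t, rfl, hCC, hst, hC1, _⟩ := AW_fill_one_inv hC hT
        obtain ⟨X', Γt, Δt, cst, rfl, hX, hΓ, hΔ, hcs⟩ := AW_node_inv hst
        obtain ⟨u, us, rfl, hu, hus⟩ := AWl_cons_inv hcs
        obtain rfl := AWl_nil_inv hus
        obtain ⟨Y', Φt, Ψt, ts', rfl, hY, hΦ, hΨ, hts⟩ := AW_node_inv hu
        obtain ⟨B1, Γ'', rfl, hB1, hΓ'⟩ := rM_cons_inv hΓ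
        obtain ⟨A', rfl, hA⟩ := rF_box_inv hB1
        have h1 : Deriv L n (C'.fill [.node X' (.box A' ::ₘ Γ'') Δt
            (.cons (.node Y' (.box A' ::ₘ Φt) Ψt ts') .nil)]) :=
          ih _ (by simp) σ _ (AW_fill_one hCC
            (AW_node hX (rM_cons hB1 hΓ') hΔ (AWl_cons' (AW_node hY (rM_cons hB1 hΦ) hΨ hts) AWl_nil')))
        refine Deriv.step (Step.r4 C' X' Y' Γ'' Δt Φt Ψt ts' A' h4 hC1) ?_
        intro p hp
        rw [List.mem_singleton] at hp
        subst hp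
        exact h1
    | r5 C X Y Γ Δ Φ Ψ A h5 hdep =>
        obtain ⟨d1, d2, hdd, hd2⟩ := hdep
        have hC : NCtx.holes C = 2 := by
          have := NCtx_holes_eq_length_holeDepths C
          rw [hdd] at this
          simpa using this.symm
        obtain ⟨C', t1, t2, rfl, hCC, hs1, hs2, hC2, hdep'⟩ := AW_fill_two_inv hC hT
        obtain ⟨X', Γt, Δt, cst, rfl, hX, hΓ, hΔ, hcs⟩ := AW_node_inv hs1
        obtain rfl := AWl_nil_inv hcs
        obtain ⟨Y', Φt, Ψt, dst, rfl, hY, hΦ, hΨ, hds⟩ := AW_node_inv hs2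
        obtain rfl := AWl_nil_inv hds
        obtain ⟨B1, Γ'', rfl, hB1, hΓ'⟩ := rM_cons_inv hΓ
        obtain ⟨A', rfl, hA⟩ := rF_box_inv hB1
        have h1 : Deriv L n (C'.fill [.node X' (.box A' ::ₘ Γ'') Δt .nil,
            .node Y' (.box A' ::ₘ Φt) Ψt .nil]) :=
          ih _ (by simp) σ _ (AW_fill_two hCC
            (AW_node hX (rM_cons hB1 hΓ') hΔ AWl_nil')
            (AW_node hY (rM_cons hB1 hΦ) hΨ AWl_nil'))
        refine Deriv.step (Step.r5 C' X' Y' Γ'' Δt Φt Ψt A' h5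
          ⟨d1, d2, by rw [hdep', hdd], hd2⟩) ?_
        intro p hp
        rw [List.mem_singleton] at hp
        subst hp
        exact h1
    | rcbf C X Y Γ Δ Φ Ψ ts x hcbf hC =>
        obtain ⟨C', t, rfl, hCC, hst, hC1, _⟩ := AW_fill_one_inv hC hT
        obtain ⟨X', Γt, Δt, cst, rfl, hX, hΓ, hΔ, hcs⟩ := AW_node_inv hst
        obtain ⟨u, us, rfl, hu, hus⟩ := AWl_cons_inv hcs
        obtain rfl := AWl_nil_inv hus
        obtain ⟨Y', Φt, Ψt, ts', rfl, hY, hΦ, hΨ, hts⟩ := AW_node_inv hu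
        obtain ⟨X'', rfl, hX'⟩ := rX_cons_inv hX
        have h1 : Deriv L n (C'.fill [.node (σ x ::ₘ X'') Γt Δt
            (.cons (.node (σ x ::ₘ Y') Φt Ψt ts') .nil)]) :=
          ih _ (by simp) σ _ (AW_fill_one hCC
            (AW_node (rX_cons hX') hΓ hΔ (AWl_cons' (AW_node (rX_cons hY) hΦ hΨ hts) AWl_nil')))
        refine Deriv.step (Step.rcbf C' X'' Y' Γt Δt Φt Ψt ts' (σ x) hcbf hC1) ?_
        intro p hp
        rw [List.mem_singleton] at hp
        subst hp
        exact h1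
    | rbf C X Y Γ Δ Φ Ψ ts x hbf hC =>
        obtain ⟨C', t, rfl, hCC, hst, hC1, _⟩ := AW_fill_one_inv hC hT
        obtain ⟨X', Γt, Δt, cst, rfl, hX, hΓ, hΔ, hcs⟩ := AW_node_inv hst
        obtain ⟨u, us, rfl, hu, hus⟩ := AWl_cons_inv hcs
        obtain rfl := AWl_nil_inv hus
        obtain ⟨Y', Φt, Ψt, ts', rfl, hY, hΦ, hΨ, hts⟩ := AW_node_inv hu
        obtain ⟨Y'', rfl, hY'⟩ := rX_cons_inv hY
        have h1 : Deriv L n (C'.fill [.node (σ x ::ₘ X') Γt Δt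
            (.cons (.node (σ x ::ₘ Y'') Φt Ψt ts') .nil)]) :=
          ih _ (by simp) σ _ (AW_fill_one hCC
            (AW_node (rX_cons hX) hΓ hΔ (AWl_cons' (AW_node (rX_cons hY') hΦ hΨ hts) AWl_nil')))
        refine Deriv.step (Step.rbf C' X' Y'' Γt Δt Φt Ψt ts' (σ x) hbf hC1) ?_
        intro p hp
        rw [List.mem_singleton] at hp
        subst hp
        exact h1
    | rui C X Γ Δ x hui hC =>
        obtain ⟨C', t, rfl, hCC, hst, hC1, _⟩ := AW_fill_one_inv hC hT
        obtain ⟨X', Γt, Δt, cst, rfl, hX, hΓ, hΔ, hcs⟩ := AW_node_inv hst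
        obtain rfl := AWl_nil_inv hcs
        have h1 : Deriv L n (C'.fill [.node (σ x ::ₘ X') Γt Δt .nil]) :=
          ih _ (by simp) σ _ (AW_fill_one hCC (AW_node (rX_cons hX) hΓ hΔ AWl_nil'))
        refine Deriv.step (Step.rui C' X' Γt Δt (σ x) hui hC1) ?_
        intro p hp
        rw [List.mem_singleton] at hp
        subst hp
        exact h1
    | r5dom C X Y Γ Δ Φ Ψ x h5 hdom hdep =>
        obtain ⟨d1, d2, hdd, hd1, hd2⟩ := hdep
        have hC : NCtx.holes C = 2 := by
          have := NCtx_holes_eq_length_holeDepths C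
          rw [hdd] at this
          simpa using this.symm
        obtain ⟨C', t1, t2, rfl, hCC, hs1, hs2, hC2, hdep'⟩ := AW_fill_two_inv hC hT
        obtain ⟨X', Γt, Δt, cst, rfl, hX, hΓ, hΔ, hcs⟩ := AW_node_inv hs1
        obtain rfl := AWl_nil_inv hcs
        obtain ⟨Y', Φt, Ψt, dst, rfl, hY, hΦ, hΨ, hds⟩ := AW_node_inv hs2
        obtain rfl := AWl_nil_inv hds
        obtain ⟨X'', rfl, hX'⟩ := rX_cons_inv hX
        have h1 : Deriv L n (C'.fill [.node (σ x ::ₘ X'') Γt Δt .nil,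
            .node (σ x ::ₘ Y') Φt Ψt .nil]) :=
          ih _ (by simp) σ _ (AW_fill_two hCC
            (AW_node (rX_cons hX') hΓ hΔ AWl_nil')
            (AW_node (rX_cons hY) hΦ hΨ AWl_nil'))
        refine Deriv.step (Step.r5dom C' X'' Y' Γt Δt Φt Ψt (σ x) h5 hdom
          ⟨d1, d2, by rw [hdep', hdd], hd1, hd2⟩) ?_
        intro p hp
        rw [List.mem_singleton] at hp
        subst hp
        exact h1

end Aux
namespace Aux
open Fml

lemma NCtxs_nil_append (b : NCtxs) : NCtxs.nil ++ b = b := rfl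

lemma NCtxs_cons_append (c : NCtx) (a b : NCtxs) :
    NCtxs.cons c a ++ b = NCtxs.cons c (a ++ b) := rfl

lemma NCtxs_append_nil (a : NCtxs) : a ++ NCtxs.nil = a := by
  match a with
  | .nil => rfl
  | .cons c cs => rw [NCtxs_cons_append, NCtxs_append_nil cs]

lemma NCtx_holes_append (a b : NCtxs) :
    NCtxs.holes (a ++ b) = NCtxs.holes a + NCtxs.holes b := by
  match a with
  | .nil => simp [NCtxs_nil_append, NCtxs.holes]
  | .cons c cs =>
      rw [NCtxs_cons_append]
      show NCtx.holes c + NCtxs.holes (cs ++ b) = NCtx.holes c + NCtxs.holes cs + NCtxs.holes b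
      rw [NCtx_holes_append cs b, Nat.add_assoc]

/-- fill of a hole-free prefix ignores the fillers -/
lemma fills_append_zero (cs : NCtxs) (h0 : NCtxs.holes cs = 0) (ds : NCtxs) (M : List NSeq) :
    NCtxs.fill (cs ++ ds) M = NCtxs.fill cs [] ++ NCtxs.fill ds M := by
  match cs with
  | .nil => rfl
  | .cons c cs =>
      unfold NCtxs.holes at h0
      have hc0 : NCtx.holes c = 0 := by omega
      have hcs0 : NCtxs.holes cs = 0 := by omega
      rw [NCtxs_cons_append]
      show NSeqs.cons (c.fill (M.take (NCtx.holes c)))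
          (NCtxs.fill (cs ++ ds) (M.drop (NCtx.holes c))) =
        NSeqs.cons (c.fill (List.take (NCtx.holes c) []))
          (NCtxs.fill cs (List.drop (NCtx.holes c) [])) ++ NCtxs.fill ds M
      rw [hc0, List.take_zero, List.drop_zero, List.take_nil, List.drop_nil,
        NSeqs_cons_append, fills_append_zero cs hcs0 ds M]

lemma NSeqs_append_assoc (a b c : NSeqs) : a ++ b ++ c = a ++ (b ++ c) := by
  match a with
  | .nil => rfl
  | .cons s ss =>
      rw [NSeqs_cons_append, NSeqs_cons_append, NSeqs_cons_append, NSeqs_append_assoc ss b c]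

lemma merge_def (X Y : Multiset ℕ) (Γ Δ Φ Ψ : Multiset Fml) (cs ds : NSeqs) :
    NSeq.merge (.node X Γ Δ cs) (.node Y Φ Ψ ds) = .node (X + Y) (Γ + Φ) (Δ + Ψ) (cs ++ ds) := rfl

lemma merge_assoc (a b c : NSeq) : (a.merge b).merge c = a.merge (b.merge c) := by
  obtain ⟨X, Γ, Δ, cs⟩ := a; obtain ⟨Y, Φ, Ψ, ds⟩ := b; obtain ⟨Z, Θ, Ξ, es⟩ := c
  rw [merge_def, merge_def, merge_def, merge_def, add_assoc, add_assoc, add_assoc,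
    NSeqs_append_assoc]

lemma foldl_merge_merge (us : List NSeq) : ∀ (b c : NSeq),
    us.foldl NSeq.merge (b.merge c) = b.merge (us.foldl NSeq.merge c) := by
  induction us with
  | nil => intro b c; rfl
  | cons u us ih =>
      intro b c
      rw [List.foldl_cons, List.foldl_cons, merge_assoc, ih]

mutual
  def toCtx : NSeq → NCtx
    | .node X Γ Δ cs => .node X Γ Δ 0 (toCtxs cs)
  def toCtxs : NSeqs → NCtxs
    | .nil => .nil
    | .cons s ss => .cons (toCtx s) (toCtxs ss)
end

mutual
  theorem toCtx_holes (s : NSeq) : NCtx.holes (toCtx s) = 0 := by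
    match s with
    | .node X Γ Δ cs =>
        show NCtx.holes (.node X Γ Δ 0 (toCtxs cs)) = 0
        unfold NCtx.holes
        rw [toCtxs_holes cs]
  theorem toCtxs_holes (ss : NSeqs) : NCtxs.holes (toCtxs ss) = 0 := by
    match ss with
    | .nil => rfl
    | .cons s ss =>
        show NCtxs.holes (.cons (toCtx s) (toCtxs ss)) = 0
        unfold NCtxs.holes
        rw [toCtx_holes s, toCtxs_holes ss]
end

mutual
  theorem toCtx_fill (s : NSeq) (M : List NSeq) : NCtx.fill (toCtx s) M = s := by
    match s with
    | .node X Γ Δ cs =>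
        show NCtx.fill (.node X Γ Δ 0 (toCtxs cs)) M = _
        unfold NCtx.fill
        rw [List.take_zero, List.drop_zero, List.foldl_nil, toCtxs_fill cs M]
  theorem toCtxs_fill (ss : NSeqs) (M : List NSeq) : NCtxs.fill (toCtxs ss) M = ss := by
    match ss with
    | .nil => rfl
    | .cons s ss =>
        show NCtxs.fill (.cons (toCtx s) (toCtxs ss)) M = _
        unfold NCtxs.fill
        rw [toCtx_fill s _, toCtxs_fill ss _]
end

mutual
  theorem plug_holes (C : NCtx) (D : NCtx) (hC : NCtx.holes C = 1) :
      NCtx.holes (C.plug D) = NCtx.holes D := by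
    match C with
    | .node X Γ Δ k cs =>
        unfold NCtx.holes at hC
        unfold NCtx.plug
        by_cases hk : k = 0
        · rw [if_pos hk]
          show k + NCtxs.holes (NCtxs.plug cs D) = NCtx.holes D
          rw [hk] at hC ⊢
          rw [plugs_holes cs D (by omega)]
          exact Nat.zero_add _
        · rw [if_neg hk]
          have hk1 : k = 1 := by omega
          have hcs0 : NCtxs.holes cs = 0 := by omega
          match D with
          | .node Y Φ Ψ j ds =>
              show NCtx.holes (.node (X + Y) (Γ + Φ) (Δ + Ψ) (k - 1 + j) (cs ++ ds))
                = NCtx.holes (.node Y Φ Ψ j ds)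
              unfold NCtx.holes
              rw [NCtx_holes_append]
              omega
  theorem plugs_holes (cs : NCtxs) (D : NCtx) (hC : NCtxs.holes cs = 1) :
      NCtxs.holes (NCtxs.plug cs D) = NCtx.holes D := by
    match cs with
    | .nil => exact absurd hC (by simp [NCtxs.holes])
    | .cons c cs =>
        unfold NCtxs.holes at hC
        unfold NCtxs.plug
        by_cases hc : NCtx.holes c = 0
        · rw [if_pos hc]
          show NCtx.holes c + NCtxs.holes (NCtxs.plug cs D) = NCtx.holes D
          rw [plugs_holes cs D (by omega), hc]
          exact Nat.zero_add _
        · rw [if_neg hc]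
          show NCtx.holes (c.plug D) + NCtxs.holes cs = NCtx.holes D
          rw [plug_holes c D (by omega)]
          have h0 : NCtxs.holes cs = 0 := by omega
          rw [h0]
          exact Nat.add_zero _
end

mutual
  theorem plug_fill (C : NCtx) (D : NCtx) (hC : NCtx.holes C = 1) (M : List NSeq)
      (hM : M.length = NCtx.holes D) :
      NCtx.fill (C.plug D) M = NCtx.fill C [NCtx.fill D M] := by
    match C with
    | .node X Γ Δ k cs =>
        unfold NCtx.holes at hC
        unfold NCtx.plug
        by_cases hk : k = 0
        · rw [if_pos hk]
          subst hk
          show NCtx.fill (.node X Γ Δ 0 (NCtxs.plug cs D)) M = _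
          unfold NCtx.fill
          rw [List.take_zero, List.drop_zero, List.foldl_nil, List.take_zero, List.drop_zero,
            List.foldl_nil, plugs_fill cs D (by omega) M hM]
        · rw [if_neg hk]
          have hk1 : k = 1 := by omega
          subst hk1
          have hcs0 : NCtxs.holes cs = 0 := by omega
          match D with
          | .node Y Φ Ψ j ds =>
              show NCtx.fill (.node (X + Y) (Γ + Φ) (Δ + Ψ) (1 - 1 + j) (cs ++ ds)) M
                = NCtx.fill (.node X Γ Δ 1 cs) [NCtx.fill (.node Y Φ Ψ j ds) M]
              unfold NCtx.fill
              simp only [Nat.sub_self, Nat.zero_add, List.take_succ_cons, List.take_zero,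
                List.drop_succ_cons, List.drop_zero, List.foldl_cons, List.foldl_nil]
              rw [fills_append_zero cs hcs0 ds (M.drop j), ← merge_def, foldl_merge_merge]
              rfl
  theorem plugs_fill (cs : NCtxs) (D : NCtx) (hC : NCtxs.holes cs = 1) (M : List NSeq)
      (hM : M.length = NCtx.holes D) :
      NCtxs.fill (NCtxs.plug cs D) M = NCtxs.fill cs [NCtx.fill D M] := by
    match cs with
    | .nil => exact absurd hC (by simp [NCtxs.holes])
    | .cons c cs =>
        unfold NCtxs.holes at hC
        unfold NCtxs.plug
        by_cases hc : NCtx.holes c = 0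
        · rw [if_pos hc]
          show NSeqs.cons (c.fill (M.take (NCtx.holes c)))
              (NCtxs.fill (NCtxs.plug cs D) (M.drop (NCtx.holes c))) = _
          rw [hc, List.take_zero, List.drop_zero, plugs_fill cs D (by omega) M hM]
          show _ = NSeqs.cons (c.fill (List.take (NCtx.holes c) [NCtx.fill D M]))
            (NCtxs.fill cs (List.drop (NCtx.holes c) [NCtx.fill D M]))
          rw [hc, List.take_zero, List.drop_zero]
        · rw [if_neg hc]
          have hc1 : NCtx.holes c = 1 := by omega
          have hcs0 : NCtxs.holes cs = 0 := by omega
          show NSeqs.cons ((c.plug D).fill (M.take (NCtx.holes (c.plug D))))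
              (NCtxs.fill cs (M.drop (NCtx.holes (c.plug D)))) = _
          rw [plug_holes c D hc1, ← hM, List.take_length, List.drop_length,
            plug_fill c D hc1 M hM]
          show _ = NSeqs.cons (c.fill ([NCtx.fill D M].take (NCtx.holes c)))
            (NCtxs.fill cs ([NCtx.fill D M].drop (NCtx.holes c)))
          rw [hc1]
          show _ = NSeqs.cons (c.fill [NCtx.fill D M]) (NCtxs.fill cs [])
          have h0 : ∀ M', NCtxs.fill cs M' = NCtxs.fill cs [] := by
            intro M'
            have := fills_append_zero cs hcs0 .nil M'
            rw [NCtxs_append_nil] at this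
            rwa [show NCtxs.fill NCtxs.nil M' = NSeqs.nil from rfl, NSeqs_append_nil] at this
          rw [h0 []]
end

end Aux
namespace Aux
open Fml

lemma Derivable.ofStep1 {L : Set Ax} {p S : NSeq} (hs : Step L [p] S) (hp : Derivable L p) :
    Derivable L S := by
  obtain ⟨n, hn⟩ := hp
  exact ⟨n + 1, Deriv.step hs (fun q hq => by
    rw [List.mem_singleton] at hq; subst hq; exact hn)⟩

lemma Derivable.weaken {L : Set Ax} {S T : NSeq} (h : Derivable L S) (hAW : AW id S T) :
    Derivable L T := by
  obtain ⟨n, hn⟩ := h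
  exact ⟨n, mega hn id T hAW⟩

lemma rX_weak_one (y : ℕ) (X : Multiset ℕ) : rX id X (y ::ₘ X) :=
  ⟨{y}, by rw [Multiset.map_id, add_comm, Multiset.singleton_add]⟩

lemma holes_D1 (ch : NSeq) :
    NCtx.holes (NCtx.node 0 0 0 1 (NCtxs.cons (toCtx ch) NCtxs.nil)) = 1 := by
  show 1 + (NCtx.holes (toCtx ch) + NCtxs.holes NCtxs.nil) = 1
  rw [toCtx_holes]
  rfl

lemma holes_D2 (X0 : Multiset ℕ) (Γ0 Δ0 : Multiset Fml) (ts : NSeqs) :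
    NCtx.holes (NCtx.node X0 Γ0 Δ0 0
      (NCtxs.cons (NCtx.node 0 0 0 1 (toCtxs ts)) NCtxs.nil)) = 1 := by
  show 0 + ((1 + NCtxs.holes (toCtxs ts)) + NCtxs.holes NCtxs.nil) = 1
  rw [toCtxs_holes]
  rfl

lemma fill_child1 (C : NCtx) (hC : NCtx.holes C = 1) (ch : NSeq) (Xu : Multiset ℕ)
    (Γu Δu : Multiset Fml) :
    (C.plug (.node 0 0 0 1 (NCtxs.cons (toCtx ch) NCtxs.nil))).fill [.node Xu Γu Δu .nil]
      = C.fill [.node Xu Γu Δu (.cons ch .nil)] := by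
  have hx : NCtx.fill (.node 0 0 0 1 (NCtxs.cons (toCtx ch) NCtxs.nil))
      [NSeq.node Xu Γu Δu .nil] = NSeq.node Xu Γu Δu (.cons ch .nil) := by
    show NSeq.merge
        (.node 0 0 0 (NCtxs.fill (NCtxs.cons (toCtx ch) NCtxs.nil) (List.drop 1 [NSeq.node Xu Γu Δu .nil])))
      (.node Xu Γu Δu .nil) = _
    rw [merge_def]
    show NSeq.node (0 + Xu) (0 + Γu) (0 + Δu)
        (NSeqs.cons (NCtx.fill (toCtx ch) _) (NCtxs.fill NCtxs.nil _) ++ NSeqs.nil) = _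
    rw [toCtx_fill, zero_add, zero_add, zero_add]
    show NSeq.node Xu Γu Δu (NSeqs.cons ch NSeqs.nil ++ NSeqs.nil) = _
    rw [NSeqs_append_nil]
  rw [plug_fill C _ hC _ (by rw [holes_D1]; rfl), hx]

lemma fill_child2 (C : NCtx) (hC : NCtx.holes C = 1) (X0 : Multiset ℕ)
    (Γ0 Δ0 : Multiset Fml) (ts : NSeqs) (Yu : Multiset ℕ) (Φu Ψu : Multiset Fml) :
    (C.plug (.node X0 Γ0 Δ0 0 (NCtxs.cons (.node 0 0 0 1 (toCtxs ts)) NCtxs.nil))).fill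
        [.node Yu Φu Ψu .nil]
      = C.fill [.node X0 Γ0 Δ0 (.cons (.node Yu Φu Ψu ts) .nil)] := by
  have h1 : NCtx.holes (NCtx.node 0 0 0 1 (toCtxs ts)) = 1 := by
    show 1 + NCtxs.holes (toCtxs ts) = 1
    rw [toCtxs_holes]
  have hE : NCtx.fill (.node 0 0 0 1 (toCtxs ts)) [NSeq.node Yu Φu Ψu .nil]
      = NSeq.node Yu Φu Ψu ts := by
    show NSeq.merge (.node 0 0 0 (NCtxs.fill (toCtxs ts) (List.drop 1 [NSeq.node Yu Φu Ψu .nil])))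
        (.node Yu Φu Ψu .nil) = _
    rw [merge_def, toCtxs_fill, zero_add, zero_add, zero_add, NSeqs_append_nil]
  have hx : NCtx.fill (.node X0 Γ0 Δ0 0 (NCtxs.cons (.node 0 0 0 1 (toCtxs ts)) NCtxs.nil))
      [NSeq.node Yu Φu Ψu .nil] = NSeq.node X0 Γ0 Δ0 (.cons (.node Yu Φu Ψu ts) .nil) := by
    show NSeq.node X0 Γ0 Δ0
        (NCtxs.fill (NCtxs.cons (NCtx.node 0 0 0 1 (toCtxs ts)) NCtxs.nil)
          [NSeq.node Yu Φu Ψu .nil]) = _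
    congr 1
    show NSeqs.cons (NCtx.fill (.node 0 0 0 1 (toCtxs ts))
        (List.take (NCtx.holes (NCtx.node 0 0 0 1 (toCtxs ts))) [NSeq.node Yu Φu Ψu .nil]))
        (NCtxs.fill NCtxs.nil _) = _
    rw [h1]
    show NSeqs.cons (NCtx.fill (.node 0 0 0 1 (toCtxs ts)) [NSeq.node Yu Φu Ψu .nil]) NSeqs.nil = _
    rw [hE]
  rw [plug_fill C _ hC _ (by rw [holes_D2]; rfl), hx]

end Aux
/-- **Generalised quantifier and diamond rules (Proposition 1)**: in every properly closed
nested calculus `NQ.L`: (1) if `R_bf ∈ NQ.L` then `L∀_bf` is admissible; (2) if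
`R_ui ∈ NQ.L` then `L∀_ui` is admissible; (3) if `R_cbf ∈ NQ.L` then `L∀_cbf` is
admissible; (4) if `R_D ∈ NQ.L` then `L_D` is admissible. -/
theorem generalised_domain_rules_admissible (L : Set Ax) (hL : ProperlyClosed L) :
    (∀ (C : NCtx), C.holes = 1 → ∀ (X Y : Multiset ℕ) (Γ Δ Φ Ψ : Multiset Fml)
      (ts : NSeqs) (x y : ℕ) (A : Fml), Ax.bf ∈ L →
      Derivable L (C.fill
        [.node X (A.sub y x ::ₘ Fml.all x A ::ₘ Γ) Δ (.cons (.node (y ::ₘ Y) Φ Ψ ts) .nil)]) →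
      Derivable L (C.fill
        [.node X (Fml.all x A ::ₘ Γ) Δ (.cons (.node (y ::ₘ Y) Φ Ψ ts) .nil)])) ∧
    (∀ (C : NCtx), C.holes = 1 → ∀ (X : Multiset ℕ) (Γ Δ : Multiset Fml)
      (x y : ℕ) (A : Fml), Ax.ui ∈ L →
      Derivable L (C.fill [.node X (A.sub y x ::ₘ Fml.all x A ::ₘ Γ) Δ .nil]) →
      Derivable L (C.fill [.node X (Fml.all x A ::ₘ Γ) Δ .nil])) ∧
    (∀ (C : NCtx), C.holes = 1 → ∀ (X Y : Multiset ℕ) (Γ Δ Φ Ψ : Multiset Fml)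
      (ts : NSeqs) (x y : ℕ) (A : Fml), Ax.cbf ∈ L →
      Derivable L (C.fill
        [.node (y ::ₘ X) Γ Δ (.cons (.node Y (A.sub y x ::ₘ Fml.all x A ::ₘ Φ) Ψ ts) .nil)]) →
      Derivable L (C.fill
        [.node (y ::ₘ X) Γ Δ (.cons (.node Y (Fml.all x A ::ₘ Φ) Ψ ts) .nil)])) ∧
    (∀ (C : NCtx), C.holes = 1 → ∀ (X : Multiset ℕ) (Γ Δ : Multiset Fml) (A : Fml),
      Ax.D ∈ L →
      Derivable L (C.fill [.node X (Fml.box A ::ₘ Γ) Δ (.cons (.node 0 {A} 0 .nil) .nil)]) →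
      Derivable L (C.fill [.node X (Fml.box A ::ₘ Γ) Δ .nil])) := by
  clear hL
  refine ⟨?_, ?_, ?_, ?_⟩
  · -- (1) L∀_bf
    intro C hC X Y Γ Δ Φ Ψ ts x y A hbf hP
    -- weaken y into the outer signature
    have h2 : Derivable L (C.fill [.node (y ::ₘ X) (A.sub y x ::ₘ Fml.all x A ::ₘ Γ) Δ
        (.cons (.node (y ::ₘ Y) Φ Ψ ts) .nil)]) :=
      Aux.Derivable.weaken hP (Aux.AW_fill_one (Aux.CAW_refl C)
        (Aux.AW_node (Aux.rX_weak_one y X) (Aux.rM_refl _) (Aux.rM_refl _)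
          (Aux.AWl_cons' (Aux.AW_refl _) Aux.AWl_nil')))
    -- L∀ at the outer node (context absorbing the bracket)
    have hC2 : (C.plug (NCtx.node 0 0 0 1
        (NCtxs.cons (Aux.toCtx (NSeq.node (y ::ₘ Y) Φ Ψ ts)) NCtxs.nil))).holes = 1 := by
      rw [Aux.plug_holes C _ hC, Aux.holes_D1]
    have h3 : Derivable L (C.fill [.node (y ::ₘ X) (Fml.all x A ::ₘ Γ) Δ
        (.cons (.node (y ::ₘ Y) Φ Ψ ts) .nil)]) := by
      rw [← Aux.fill_child1 C hC (NSeq.node (y ::ₘ Y) Φ Ψ ts)]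
      refine Aux.Derivable.ofStep1 (Step.allL _ X Γ Δ x y A hC2) ?_
      rw [Aux.fill_child1 C hC (NSeq.node (y ::ₘ Y) Φ Ψ ts)]
      exact h2
    exact Aux.Derivable.ofStep1 (Step.rbf C X Y (Fml.all x A ::ₘ Γ) Δ Φ Ψ ts y hbf hC) h3
  · -- (2) L∀_ui
    intro C hC X Γ Δ x y A hui hP
    have h2 : Derivable L (C.fill [.node (y ::ₘ X) (A.sub y x ::ₘ Fml.all x A ::ₘ Γ) Δ .nil]) :=
      Aux.Derivable.weaken hP (Aux.AW_fill_one (Aux.CAW_refl C)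
        (Aux.AW_node (Aux.rX_weak_one y X) (Aux.rM_refl _) (Aux.rM_refl _) Aux.AWl_nil'))
    have h3 : Derivable L (C.fill [.node (y ::ₘ X) (Fml.all x A ::ₘ Γ) Δ .nil]) :=
      Aux.Derivable.ofStep1 (Step.allL C X Γ Δ x y A hC) h2
    exact Aux.Derivable.ofStep1 (Step.rui C X (Fml.all x A ::ₘ Γ) Δ y hui hC) h3
  · -- (3) L∀_cbf
    intro C hC X Y Γ Δ Φ Ψ ts x y A hcbf hP
    have h2 : Derivable L (C.fill [.node (y ::ₘ X) Γ Δ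
        (.cons (.node (y ::ₘ Y) (A.sub y x ::ₘ Fml.all x A ::ₘ Φ) Ψ ts) .nil)]) :=
      Aux.Derivable.weaken hP (Aux.AW_fill_one (Aux.CAW_refl C)
        (Aux.AW_node (Aux.rX_refl _) (Aux.rM_refl _) (Aux.rM_refl _)
          (Aux.AWl_cons'
            (Aux.AW_node (Aux.rX_weak_one y Y) (Aux.rM_refl _) (Aux.rM_refl _) (Aux.AWl_refl ts))
            Aux.AWl_nil')))
    have hC3 : (C.plug (NCtx.node (y ::ₘ X) Γ Δ 0
        (NCtxs.cons (NCtx.node 0 0 0 1 (Aux.toCtxs ts)) NCtxs.nil))).holes = 1 := by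
      rw [Aux.plug_holes C _ hC, Aux.holes_D2]
    have h3 : Derivable L (C.fill [.node (y ::ₘ X) Γ Δ
        (.cons (.node (y ::ₘ Y) (Fml.all x A ::ₘ Φ) Ψ ts) .nil)]) := by
      rw [← Aux.fill_child2 C hC (y ::ₘ X) Γ Δ ts]
      refine Aux.Derivable.ofStep1 (Step.allL _ Y Φ Ψ x y A hC3) ?_
      rw [Aux.fill_child2 C hC (y ::ₘ X) Γ Δ ts]
      exact h2
    exact Aux.Derivable.ofStep1
      (Step.rcbf C X Y Γ Δ (Fml.all x A ::ₘ Φ) Ψ ts y hcbf hC) h3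
  · -- (4) L_D
    intro C hC X Γ Δ A hD hP
    have h2 : Derivable L (C.fill [.node X (Fml.box A ::ₘ Γ) Δ
        (.cons (.node 0 0 0 .nil) .nil)]) := by
      refine Aux.Derivable.ofStep1 (Step.boxL C X 0 Γ Δ 0 0 .nil A hC) ?_
      rw [show (A ::ₘ (0 : Multiset Fml)) = {A} from Multiset.cons_zero A]
      exact hP
    exact Aux.Derivable.ofStep1 (Step.rD C X (Fml.box A ::ₘ Γ) Δ hD hC) h2

end NQML
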